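/- arXiv:0711.4871 — 7 statements merged into one kernel-verified Lean document; each statement's English description precedes it below -/
import Mathlib

section
/- For the nearest-neighbor random walk with constant drift δ ∈ (0,1) toward the origin, the second moment of the first return time to the origin satisfies E(τ²) = 1 + δ⁻¹ + δ⁻² + δ⁻³. -/
/-!
After its first step the walk is at `±1`. From there it returns to `0` at once with probability
`(1 + δ)/2`; otherwise it steps out to `±2` and must first come back to `±1`, then go on to `0`.
Each of the two legs, counted together with the step that starts it, is distributed like `τ`, so
the law `r` of `τ` satisfies `r = (1 - δ)/2 • (r ⋆ r) + (1 + δ)/2 • 𝟙_{2}`. Since the moments of a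
Cauchy product follow the binomial rule, the moments `Rₖ = ∑ nᵏ r n` then satisfy
`R₀ = (1 - δ)/2 R₀² + (1 + δ)/2`, forcing `R₀ = 1` because the other root exceeds `1`,
`δ R₁ = 1 + δ`, and `δ R₂ = (1 - δ) R₁² + 2 (1 + δ)`. The hitting probabilities decay geometrically,
which justifies every interchange of sums.
-/

/-- One-step transition probability of the nearest-neighbor random walk on ℤ with
constant drift `δ` toward the origin: from 0 it steps to ±1 with probability 1/2;
from `i ≠ 0` it steps away from 0 with probability `(1-δ)/2` and toward 0 with
probability `(1+δ)/2`. -/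
noncomputable def stepP (δ : ℝ) (i j : ℤ) : ℝ :=
  if i = 0 then (if j = 1 ∨ j = -1 then 1 / 2 else 0)
  else if j = i + 1 then (if 0 < i then (1 - δ) / 2 else (1 + δ) / 2)
  else if j = i - 1 then (if 0 < i then (1 + δ) / 2 else (1 - δ) / 2)
  else 0

/-- `hitD δ n j` is the probability that the walk started at `j` first hits `0`
exactly at time `n`. -/
noncomputable def hitD (δ : ℝ) : ℕ → ℤ → ℝ
  | 0, j => if j = 0 then 1 else 0
  | n + 1, j =>
      if j = 0 then 0
      else stepP δ j (j + 1) * hitD δ n (j + 1) + stepP δ j (j - 1) * hitD δ n (j - 1)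

/-- `retD δ n` is the probability that the first return time `τ` to `0` of the walk
started at `0` equals `n`. -/
noncomputable def retD (δ : ℝ) : ℕ → ℝ
  | 0 => 0
  | n + 1 => stepP δ 0 1 * hitD δ n 1 + stepP δ 0 (-1) * hitD δ n (-1)

open Finset

theorem hasSum_pow_mul_sum_antidiagonal {f g : ℕ → ℝ}
    (hf : ∀ k, Summable fun n : ℕ => (n : ℝ) ^ k * f n)
    (hg : ∀ k, Summable fun n : ℕ => (n : ℝ) ^ k * g n) (m : ℕ) :
    HasSum (fun n : ℕ => (n : ℝ) ^ m * ∑ p ∈ antidiagonal n, f p.1 * g p.2)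
      (∑ i ∈ range (m + 1),
        (m.choose i : ℝ) * ((∑' n : ℕ, (n : ℝ) ^ i * f n) * ∑' n : ℕ, (n : ℝ) ^ (m - i) * g n)) := by
  have hcauchy : ∀ i j, HasSum
      (fun n : ℕ => ∑ p ∈ antidiagonal n, (p.1 : ℝ) ^ i * f p.1 * ((p.2 : ℝ) ^ j * g p.2))
      ((∑' n : ℕ, (n : ℝ) ^ i * f n) * ∑' n : ℕ, (n : ℝ) ^ j * g n) := by
    intro i j
    rw [tsum_mul_tsum_eq_tsum_sum_antidiagonal_of_summable_norm (hf i).norm (hg j).norm]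
    exact (summable_norm_sum_mul_antidiagonal_of_summable_norm (hf i).norm (hg j).norm).of_norm
      |>.hasSum
  have hbinom : ∀ n : ℕ, (n : ℝ) ^ m * ∑ p ∈ antidiagonal n, f p.1 * g p.2 =
      ∑ i ∈ range (m + 1), (m.choose i : ℝ) *
        ∑ p ∈ antidiagonal n, (p.1 : ℝ) ^ i * f p.1 * ((p.2 : ℝ) ^ (m - i) * g p.2) := by
    intro n
    simp_rw [mul_sum]
    rw [sum_comm]
    refine sum_congr rfl fun p hp => ?_
    rw [← mem_antidiagonal.mp hp, Nat.cast_add, add_pow, sum_mul]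
    refine sum_congr rfl fun i _ => ?_
    ring
  simp_rw [hbinom]
  exact hasSum_sum fun i _ => (hcauchy i (m - i)).mul_left (m.choose i : ℝ)

section Walk

variable {δ : ℝ}

theorem stepP_nonneg (h₀ : -1 ≤ δ) (h₁ : δ ≤ 1) (i j : ℤ) : 0 ≤ stepP δ i j := by
  unfold stepP
  split_ifs <;> linarith

theorem stepP_add_stepP {i : ℤ} (hi : i ≠ 0) : stepP δ i (i + 1) + stepP δ i (i - 1) = 1 := by
  unfold stepP
  split_ifs <;> first | (exfalso; omega) | ring

theorem stepP_neg (i j : ℤ) : stepP δ (-i) (-j) = stepP δ i j := by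
  unfold stepP
  split_ifs <;> first | rfl | omega

theorem hitD_zero_start (n : ℕ) : hitD δ n 0 = if n = 0 then 1 else 0 := by
  cases n <;> simp [hitD]

theorem hitD_succ_of_pos (n : ℕ) {j : ℤ} (hj : 0 < j) :
    hitD δ (n + 1) j = (1 - δ) / 2 * hitD δ n (j + 1) + (1 + δ) / 2 * hitD δ n (j - 1) := by
  simp [hitD, stepP, hj.ne', hj, show j - 1 ≠ j + 1 by omega]

theorem hitD_neg (n : ℕ) (j : ℤ) : hitD δ n (-j) = hitD δ n j := by
  induction n generalizing j with
  | zero => simp [hitD]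
  | succ n ih =>
    by_cases hj : j = 0
    · simp [hj]
    · have h₁ : -j + 1 = -(j - 1) := by ring
      have h₂ : -j - 1 = -(j + 1) := by ring
      simp only [hitD, neg_eq_zero, hj, if_false, h₁, h₂, stepP_neg, ih]
      ring

theorem hitD_nonneg (h₀ : -1 ≤ δ) (h₁ : δ ≤ 1) (n : ℕ) (j : ℤ) : 0 ≤ hitD δ n j := by
  induction n generalizing j with
  | zero => unfold hitD; split_ifs <;> norm_num
  | succ n ih =>
    unfold hitD
    split_ifs
    · rfl
    · exact add_nonneg (mul_nonneg (stepP_nonneg h₀ h₁ _ _) (ih _))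
        (mul_nonneg (stepP_nonneg h₀ h₁ _ _) (ih _))

theorem sum_range_hitD_le_one (h₀ : -1 ≤ δ) (h₁ : δ ≤ 1) (N : ℕ) (j : ℤ) :
    ∑ n ∈ range N, hitD δ n j ≤ 1 := by
  induction N generalizing j with
  | zero => simp
  | succ N ih =>
    rw [sum_range_succ']
    by_cases hj : j = 0
    · simp [hitD, hj]
    · have hstep : ∑ n ∈ range N, hitD δ (n + 1) j =
          stepP δ j (j + 1) * ∑ n ∈ range N, hitD δ n (j + 1) +
            stepP δ j (j - 1) * ∑ n ∈ range N, hitD δ n (j - 1) := by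
        simp only [hitD, hj, if_false, sum_add_distrib, mul_sum]
      calc ∑ n ∈ range N, hitD δ (n + 1) j + hitD δ 0 j
          ≤ stepP δ j (j + 1) * 1 + stepP δ j (j - 1) * 1 := by
            rw [hstep, show hitD δ 0 j = 0 from if_neg hj, add_zero]
            gcongr
            exacts [stepP_nonneg h₀ h₁ _ _, ih _, stepP_nonneg h₀ h₁ _ _, ih _]
        _ = 1 := by rw [mul_one, mul_one, stepP_add_stepP hj]

theorem hitD_le_geometric (h₀ : -1 ≤ δ) (h₁ : δ < 1) (n j : ℕ) :
    hitD δ n j ≤ (1 - δ ^ 2 / 2) ^ n * (1 - δ)⁻¹ ^ j := by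
  have ht : 0 < (1 - δ)⁻¹ := inv_pos.mpr (by linarith)
  have hs : 0 < 1 - δ ^ 2 / 2 := by nlinarith
  -- `t = (1 - δ)⁻¹` solves `(1 - δ)/2 * t² + (1 + δ)/2 = s * t` with `s = 1 - δ²/2 < 1`
  have key : (1 - δ) / 2 * (1 - δ)⁻¹ ^ 2 + (1 + δ) / 2 = (1 - δ ^ 2 / 2) * (1 - δ)⁻¹ := by
    field_simp [show 1 - δ ≠ 0 by linarith]
    ring
  induction n generalizing j with
  | zero =>
    unfold hitD
    split_ifs with h
    · obtain rfl : j = 0 := by exact_mod_cast h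
      simp
    · positivity
  | succ n ih =>
    rcases j with _ | j
    · rw [Nat.cast_zero, hitD_zero_start, if_neg n.succ_ne_zero]
      positivity
    · rw [Nat.cast_succ, hitD_succ_of_pos n (by positivity), add_sub_cancel_right]
      calc (1 - δ) / 2 * hitD δ n (↑j + 1 + 1) + (1 + δ) / 2 * hitD δ n ↑j
          ≤ (1 - δ) / 2 * ((1 - δ ^ 2 / 2) ^ n * (1 - δ)⁻¹ ^ (j + 2))
            + (1 + δ) / 2 * ((1 - δ ^ 2 / 2) ^ n * (1 - δ)⁻¹ ^ j) := by
            have := ih (j + 2)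
            push_cast at this
            exact add_le_add (mul_le_mul_of_nonneg_left (by rwa [add_assoc, one_add_one_eq_two])
              (by linarith)) (mul_le_mul_of_nonneg_left (ih j) (by linarith))
        _ = (1 - δ ^ 2 / 2) ^ (n + 1) * (1 - δ)⁻¹ ^ (j + 1) := by
            linear_combination (1 - δ ^ 2 / 2) ^ n * (1 - δ)⁻¹ ^ j * key

theorem hitD_add_one_eq_sum_antidiagonal (n : ℕ) {j : ℤ} (hj : 1 ≤ j) :
    hitD δ n (j + 1) = ∑ p ∈ antidiagonal n, hitD δ p.1 1 * hitD δ p.2 j := by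
  induction n generalizing j with
  | zero => simp [hitD, show j + 1 ≠ 0 by omega]
  | succ n ih =>
    rw [Nat.sum_antidiagonal_succ', hitD_succ_of_pos n (by omega), add_sub_cancel_right]
    simp only [hitD_succ_of_pos _ (show 0 < j by omega), mul_add, sum_add_distrib,
      ← mul_sum, mul_left_comm (hitD δ _ 1)]
    rw [← ih (by omega), show hitD δ 0 j = 0 from if_neg (by omega), mul_zero, zero_add]
    congr 2
    rcases hj.eq_or_lt with rfl | hj
    · rw [sum_eq_single (n, 0)]
      · simp [hitD_zero_start]
      · rintro ⟨k, l⟩ hkl hne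
        obtain rfl | hl := eq_or_ne l 0
        · simp_all
        · simp [hitD_zero_start, hl]
      · simp
    · rw [← ih (by omega : 1 ≤ j - 1), sub_add_cancel]

theorem retD_succ (n : ℕ) : retD δ (n + 1) = hitD δ n 1 := by
  norm_num [retD, hitD_neg n 1, stepP, ← add_mul]

theorem retD_nonneg (h₀ : -1 ≤ δ) (h₁ : δ ≤ 1) (n : ℕ) : 0 ≤ retD δ n := by
  cases n with
  | zero => simp [retD]
  | succ n => rw [retD_succ]; exact hitD_nonneg h₀ h₁ n 1

theorem retD_le_geometric (h₀ : -1 ≤ δ) (h₁ : δ < 1) (n : ℕ) :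
    retD δ n ≤ ((1 - δ) * (1 - δ ^ 2 / 2))⁻¹ * (1 - δ ^ 2 / 2) ^ n := by
  have hs : 0 < 1 - δ ^ 2 / 2 := by nlinarith
  have ht : 0 < 1 - δ := by linarith
  cases n with
  | zero => rw [retD.eq_1]; positivity
  | succ n =>
    have := hitD_le_geometric h₀ h₁ n 1
    rw [Nat.cast_one] at this
    rw [retD_succ]
    refine this.trans_eq ?_
    generalize 1 - δ ^ 2 / 2 = s at hs
    field_simp
    ring

theorem summable_pow_mul_retD (h₀ : -1 ≤ δ) (h₁ : δ < 1) (hδ : δ ≠ 0) (k : ℕ) :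
    Summable fun n : ℕ => (n : ℝ) ^ k * retD δ n := by
  have hs : ‖1 - δ ^ 2 / 2‖ < 1 := by
    rw [Real.norm_eq_abs, abs_lt]; constructor <;> nlinarith [sq_pos_of_ne_zero hδ]
  refine .of_nonneg_of_le (fun n => mul_nonneg (by positivity) (retD_nonneg h₀ h₁.le n))
    (fun n => mul_le_mul_of_nonneg_left (retD_le_geometric h₀ h₁ n) (by positivity))
    ?_
  exact ((summable_pow_mul_geometric_of_norm_lt_one k hs).mul_left
    ((1 - δ) * (1 - δ ^ 2 / 2))⁻¹).congr fun n => by ring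

theorem retD_eq_sum_antidiagonal (n : ℕ) :
    retD δ n = (1 - δ) / 2 * ∑ p ∈ antidiagonal n, retD δ p.1 * retD δ p.2
      + (1 + δ) / 2 * if n = 2 then 1 else 0 := by
  match n with
  | 0 => simp [retD]
  | 1 => simp [retD, hitD, Nat.sum_antidiagonal_succ]
  | n + 2 =>
    rw [Nat.sum_antidiagonal_succ, Nat.sum_antidiagonal_succ']
    simp only [retD_succ, retD.eq_1, mul_zero, zero_mul, zero_add]
    rw [hitD_succ_of_pos n one_pos, hitD_add_one_eq_sum_antidiagonal n le_rfl, sub_self,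
      hitD_zero_start]
    simp

end Walk

section Moments

variable {δ : ℝ}

noncomputable def retMoment (δ : ℝ) (k : ℕ) : ℝ := ∑' n : ℕ, (n : ℝ) ^ k * retD δ n

theorem retMoment_eq (h₀ : -1 ≤ δ) (h₁ : δ < 1) (hδ : δ ≠ 0) (m : ℕ) :
    retMoment δ m = (1 - δ) / 2 * ∑ i ∈ range (m + 1),
        (m.choose i : ℝ) * (retMoment δ i * retMoment δ (m - i)) + (1 + δ) / 2 * 2 ^ m := by
  have hsum := summable_pow_mul_retD h₀ h₁ hδ
  have hconv := (hasSum_pow_mul_sum_antidiagonal hsum hsum m).mul_left ((1 - δ) / 2)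
  have hatom := (hasSum_ite_eq 2 ((2 : ℝ) ^ m)).mul_left ((1 + δ) / 2)
  refine ((hconv.add hatom).congr_fun fun n => ?_).tsum_eq
  rw [retD_eq_sum_antidiagonal n]
  split_ifs with h
  · subst h; push_cast; ring
  · ring

theorem retMoment_zero_le_one (h₀ : -1 ≤ δ) (h₁ : δ ≤ 1) : retMoment δ 0 ≤ 1 := by
  refine Real.tsum_le_of_sum_range_le (fun n => by simpa using retD_nonneg h₀ h₁ n) fun N => ?_
  cases N with
  | zero => simp
  | succ N =>
    simpa [sum_range_succ', retD_succ, retD.eq_1] using sum_range_hitD_le_one h₀ h₁ N 1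

theorem retMoment_zero (h₀ : 0 < δ) (h₁ : δ < 1) : retMoment δ 0 = 1 := by
  have hrec := retMoment_eq (by linarith) h₁ h₀.ne' 0
  have hle := retMoment_zero_le_one (δ := δ) (by linarith) h₁.le
  norm_num at hrec
  -- the other root of `(1 - δ)/2 * x² - x + (1 + δ)/2` is `(1 + δ)/(1 - δ) > 1`
  have hfac : (retMoment δ 0 - 1) * ((1 - δ) / 2 * retMoment δ 0 - (1 + δ) / 2) = 0 := by
    linear_combination -hrec
  rcases mul_eq_zero.mp hfac with h | h
  · linarith
  · nlinarith

end Moments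

/-- For the walk with constant drift `δ ∈ (0,1)` toward the origin, the second
moment of the first return time to the origin is `E(τ²) = 1 + δ⁻¹ + δ⁻² + δ⁻³`. -/
theorem second_moment_first_return (δ : ℝ) (hδ0 : 0 < δ) (hδ1 : δ < 1) :
    ∑' n : ℕ, (n : ℝ) ^ 2 * retD δ n = 1 + δ⁻¹ + δ⁻¹ ^ 2 + δ⁻¹ ^ 3 := by
  have hrec := retMoment_eq (by linarith) hδ1 hδ0.ne'
  have h0 := retMoment_zero hδ0 hδ1
  have h1 := hrec 1
  have h2 := hrec 2
  norm_num [sum_range_succ, h0] at h1 h2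
  have hR1 : δ * retMoment δ 1 = 1 + δ := by linear_combination h1
  have hR2 : δ ^ 3 * retMoment δ 2 = δ ^ 3 + δ ^ 2 + δ + 1 := by
    linear_combination δ ^ 2 * h2 + (1 - δ) * (δ * retMoment δ 1 + 1 + δ) * hR1
  change retMoment δ 2 = _
  field_simp
  linear_combination hR2
end

section
/- Let δ ∈ (0,1). The measure μ_δ on 2Z with μ_δ(0) = 2δ/(1+δ) and μ_δ(2i) = (2δ(1-δ)/(1+δ)³)·((1-δ)/(1+δ))^{2(|i|-1)} for i ≠ 0 is stationary for the two-step transition kernel of the oscillating random walk with constant drift δ toward the origin. -/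
/-- The claimed stationary distribution of the two-step chain of the oscillating
random walk with drift `δ`: `muD δ i` is the mass of the even point `2*i`. -/
noncomputable def muD (δ : ℝ) (i : ℤ) : ℝ :=
  if i = 0 then 2 * δ / (1 + δ)
  else (2 * δ * (1 - δ) / (1 + δ) ^ 3) * ((1 - δ) / (1 + δ)) ^ (2 * (i.natAbs - 1))


/-!
`μ_δ` is the restriction to `2ℤ` of the reversible measure `π` of the one-step walk
(`π 1 = π 0 / (1 + δ)` and `π (k + 1) = π k * (1 - δ) / (1 + δ)` for `k ≥ 1`, symmetrically on
the negative side). Detailed balance of a nearest-neighbour chain makes `π` stationary at every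
site, and since the walk alternates parity, the two-step mass arriving at `2i` is the one-step
mass arriving at `2i - 1` and `2i + 1` pushed on to `2i`, which sums to `π (2i)`.
-/

section NearestNeighbour

variable {P : ℤ → ℤ → ℝ} {ν : ℤ → ℝ}

theorem stationary_of_detailedBalance (hrow : ∀ k, P k (k - 1) + P k (k + 1) = 1)
    (hbal : ∀ k, ν k * P k (k + 1) = ν (k + 1) * P (k + 1) k) (k : ℤ) :
    ν (k - 1) * P (k - 1) k + ν (k + 1) * P (k + 1) k = ν k := by
  have hleft := hbal (k - 1)
  rw [sub_add_cancel] at hleft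
  linear_combination hleft - hbal k + ν k * hrow k

theorem twoStep_stationary_of_detailedBalance
    (hP : ∀ k m, m ≠ k + 1 → m ≠ k - 1 → P k m = 0)
    (hrow : ∀ k, P k (k - 1) + P k (k + 1) = 1)
    (hbal : ∀ k, ν k * P k (k + 1) = ν (k + 1) * P (k + 1) k) (i : ℤ) :
    ∑' j : ℤ, ν (2 * j) *
        (P (2 * j) (2 * j + 1) * P (2 * j + 1) (2 * i)
          + P (2 * j) (2 * j - 1) * P (2 * j - 1) (2 * i))
      = ν (2 * i) := by
  have hsupp : ∀ j ∉ ({i - 1, i, i + 1} : Finset ℤ),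
      ν (2 * j) * (P (2 * j) (2 * j + 1) * P (2 * j + 1) (2 * i)
        + P (2 * j) (2 * j - 1) * P (2 * j - 1) (2 * i)) = 0 := by
    intro j hj
    simp only [Finset.mem_insert, Finset.mem_singleton] at hj
    rw [hP (2 * j + 1) (2 * i) (by omega) (by omega),
      hP (2 * j - 1) (2 * i) (by omega) (by omega)]
    ring
  rw [tsum_eq_sum hsupp, Finset.sum_insert (by simp; omega), Finset.sum_insert (by simp),
    Finset.sum_singleton, hP (2 * (i - 1) - 1) (2 * i) (by omega) (by omega),
    hP (2 * (i + 1) + 1) (2 * i) (by omega) (by omega),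
    show 2 * (i - 1) + 1 = 2 * i - 1 by ring, show 2 * (i + 1) - 1 = 2 * i + 1 by ring]
  have hodd_below := stationary_of_detailedBalance hrow hbal (2 * i - 1)
  have hodd_above := stationary_of_detailedBalance hrow hbal (2 * i + 1)
  rw [show 2 * i - 1 - 1 = 2 * (i - 1) by ring, sub_add_cancel] at hodd_below
  rw [add_sub_cancel_right, show 2 * i + 1 + 1 = 2 * (i + 1) by ring] at hodd_above
  linear_combination P (2 * i - 1) (2 * i) * hodd_below + P (2 * i + 1) (2 * i) * hodd_above
    + stationary_of_detailedBalance hrow hbal (2 * i)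

end NearestNeighbour

section StepP

variable (δ : ℝ) {k : ℤ}

theorem stepP_eq_zero {m : ℤ} (h₁ : m ≠ k + 1) (h₂ : m ≠ k - 1) :
    stepP δ k m = 0 := by
  unfold stepP
  split_ifs <;> first | rfl | omega

theorem stepP_down_add_stepP_up (k : ℤ) :
    stepP δ k (k - 1) + stepP δ k (k + 1) = 1 := by
  unfold stepP
  split_ifs <;> first | omega | ring

theorem stepP_succ_of_pos (hk : 0 < k) : stepP δ k (k + 1) = (1 - δ) / 2 := by
  simp [stepP, hk, hk.ne']

theorem stepP_pred_of_pos (hk : 0 < k) : stepP δ k (k - 1) = (1 + δ) / 2 := by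
  simp [stepP, hk, hk.ne', show k - 1 ≠ k + 1 by omega]

theorem stepP_succ_of_neg (hk : k < 0) : stepP δ k (k + 1) = (1 + δ) / 2 := by
  simp [stepP, hk.not_gt, hk.ne]

theorem stepP_pred_of_neg (hk : k < 0) : stepP δ k (k - 1) = (1 - δ) / 2 := by
  simp [stepP, hk.not_gt, hk.ne, show k - 1 ≠ k + 1 by omega]

end StepP

noncomputable def piD (δ : ℝ) (k : ℤ) : ℝ :=
  if k = 0 then 2 * δ / (1 + δ)
  else 2 * δ / (1 + δ) ^ 2 * ((1 - δ) / (1 + δ)) ^ (k.natAbs - 1)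

theorem piD_succ_of_pos (δ : ℝ) {k : ℤ} (hk : 0 < k) :
    piD δ (k + 1) = piD δ k * ((1 - δ) / (1 + δ)) := by
  rw [piD, piD, if_neg (by omega), if_neg (by omega),
    show (k + 1).natAbs - 1 = k.natAbs - 1 + 1 by omega, pow_succ ((1 - δ) / (1 + δ)), mul_assoc]

theorem piD_pred_of_neg (δ : ℝ) {k : ℤ} (hk : k < 0) :
    piD δ (k - 1) = piD δ k * ((1 - δ) / (1 + δ)) := by
  rw [piD, piD, if_neg (by omega), if_neg (by omega),
    show (k - 1).natAbs - 1 = k.natAbs - 1 + 1 by omega, pow_succ ((1 - δ) / (1 + δ)), mul_assoc]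

theorem piD_detailedBalance {δ : ℝ} (hδ : 1 + δ ≠ 0) (k : ℤ) :
    piD δ k * stepP δ k (k + 1) = piD δ (k + 1) * stepP δ (k + 1) k := by
  rcases lt_trichotomy k 0 with hk | rfl | hk
  · obtain rfl | hk' := eq_or_lt_of_le (show k ≤ -1 by omega)
    · norm_num [piD, stepP]
      field_simp
    · have hpi := piD_pred_of_neg δ (show k + 1 < 0 by omega)
      have hstep := stepP_pred_of_neg δ (show k + 1 < 0 by omega)
      rw [add_sub_cancel_right] at hpi hstep
      rw [hpi, hstep, stepP_succ_of_neg δ hk]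
      field_simp
  · norm_num [piD, stepP]
    field_simp
  · have hstep := stepP_pred_of_pos δ (show 0 < k + 1 by omega)
    rw [add_sub_cancel_right] at hstep
    rw [piD_succ_of_pos δ hk, hstep, stepP_succ_of_pos δ hk]
    field_simp

theorem muD_eq_piD (δ : ℝ) (i : ℤ) : muD δ i = piD δ (2 * i) := by
  rw [muD, piD]
  split_ifs
  · rfl
  · omega
  · omega
  · rw [show (2 * i).natAbs - 1 = 2 * (i.natAbs - 1) + 1 by omega, pow_succ ((1 - δ) / (1 + δ))]
    field_simp

theorem muD_stationary_general (δ : ℝ) (hδ0 : 0 < δ) (i : ℤ) :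
    ∑' j : ℤ, muD δ j *
        (stepP δ (2 * j) (2 * j + 1) * stepP δ (2 * j + 1) (2 * i)
          + stepP δ (2 * j) (2 * j - 1) * stepP δ (2 * j - 1) (2 * i))
      = muD δ i := by
  simp only [muD_eq_piD]
  exact twoStep_stationary_of_detailedBalance (fun _ _ ↦ stepP_eq_zero δ)
    (stepP_down_add_stepP_up δ) (piD_detailedBalance (by linarith)) i

/-- The measure `μ_δ` on `2ℤ` is stationary for the two-step transition kernel of the
oscillating random walk with constant drift `δ` toward the origin: for every even
state `2*i`, `∑_j μ_δ(2j) P²(2j, 2i) = μ_δ(2i)`, where the two-step kernel is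
`P²(2j,2i) = p(2j,2j+1) p(2j+1,2i) + p(2j,2j-1) p(2j-1,2i)`. -/
theorem muD_stationary (δ : ℝ) (hδ0 : 0 < δ) (hδ1 : δ < 1) (i : ℤ) :
    ∑' j : ℤ, muD δ j *
        (stepP δ (2 * j) (2 * j + 1) * stepP δ (2 * j + 1) (2 * i)
          + stepP δ (2 * j) (2 * j - 1) * stepP δ (2 * j - 1) (2 * i))
      = muD δ i :=
  muD_stationary_general δ hδ0 i
end

section
/- Let δ ∈ (0,1) and λ > 0 satisfy e^{2λ} = 1 + δ². Then (2δ/(1+δ))·[1 + (2(1-δ)/(1+δ)²)·Σ_{j≥1}((1-δ)/(1+δ))^{2(j-1)}·((1-sqrt(1-(1-δ⁴)))/((1-δ)sqrt(1+δ²)))^{2j}] = 2/(1+δ). -/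
/-- The geometric-series computation from the proof of the convergence-rate bound:
with `δ ∈ (0,1)` and `e^λ = √(1+δ²)` (so `e^{2λ}(1-δ²) = 1-δ⁴ < 1`),
`(2δ/(1+δ))·[1 + (2(1-δ)/(1+δ)²)·Σ_{j≥1} ((1-δ)/(1+δ))^{2(j-1)}
·((1-√(1-(1-δ⁴)))/((1-δ)√(1+δ²)))^{2j}] = 2/(1+δ)`. -/
theorem geometric_series_identity (δ : ℝ) (hδ0 : 0 < δ) (hδ1 : δ < 1) :
    (2 * δ / (1 + δ)) *
      (1 + (2 * (1 - δ) / (1 + δ) ^ 2) *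
        ∑' j : ℕ, ((1 - δ) / (1 + δ)) ^ (2 * j) *
          ((1 - Real.sqrt (1 - (1 - δ ^ 4)))
            / ((1 - δ) * Real.sqrt (1 + δ ^ 2))) ^ (2 * (j + 1)))
      = 2 / (1 + δ) := by
  have hd1 : (1 : ℝ) - δ ≠ 0 := by linarith
  have hd2 : (1 : ℝ) + δ ≠ 0 := by linarith
  have hspos : (0 : ℝ) < 1 + δ ^ 2 := by positivity
  set s := Real.sqrt (1 + δ ^ 2) with hs
  have hs2 : s ^ 2 = 1 + δ ^ 2 := Real.sq_sqrt hspos.le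
  have hsne : s ≠ 0 := by
    intro h; rw [h] at hs2; simp at hs2; nlinarith
  have hsq : Real.sqrt (1 - (1 - δ ^ 4)) = δ ^ 2 := by
    have : (1 : ℝ) - (1 - δ ^ 4) = (δ ^ 2) ^ 2 := by ring
    rw [this, Real.sqrt_sq (by positivity)]
  rw [hsq]
  set A : ℝ := (1 + δ) ^ 2 / (1 + δ ^ 2) with hA
  set q : ℝ := (1 - δ) ^ 2 / (1 + δ ^ 2) with hq
  have hterm : ∀ j : ℕ,
      ((1 - δ) / (1 + δ)) ^ (2 * j) *
        ((1 - δ ^ 2) / ((1 - δ) * s)) ^ (2 * (j + 1)) = A * q ^ j := by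
    intro j
    have e1 : ((1 - δ) / (1 + δ)) ^ (2 * j) = (((1 - δ) / (1 + δ)) ^ 2) ^ j := by
      rw [← pow_mul]
    have e2 : ((1 - δ ^ 2) / ((1 - δ) * s)) ^ (2 * (j + 1))
        = (((1 - δ ^ 2) / ((1 - δ) * s)) ^ 2) ^ j * ((1 - δ ^ 2) / ((1 - δ) * s)) ^ 2 := by
      rw [← pow_mul, mul_add, mul_one, pow_add]
    have e3 : ((1 - δ ^ 2) / ((1 - δ) * s)) ^ 2 = A := by
      rw [hA, div_pow, mul_pow, hs2]
      rw [div_eq_div_iff (by positivity) (by positivity)]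
      ring
    have e4 : ((1 - δ) / (1 + δ)) ^ 2 * (((1 - δ ^ 2) / ((1 - δ) * s)) ^ 2) = q := by
      rw [e3, hA, hq, div_pow]
      field_simp
    rw [e1, e2]
    calc (((1 - δ) / (1 + δ)) ^ 2) ^ j * ((((1 - δ ^ 2) / ((1 - δ) * s)) ^ 2) ^ j
          * ((1 - δ ^ 2) / ((1 - δ) * s)) ^ 2)
        = (((1 - δ) / (1 + δ)) ^ 2 * ((1 - δ ^ 2) / ((1 - δ) * s)) ^ 2) ^ j
          * ((1 - δ ^ 2) / ((1 - δ) * s)) ^ 2 := by rw [mul_pow]; ring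
      _ = A * q ^ j := by rw [e4, e3]; ring
  have hq1 : q < 1 := by
    rw [hq, div_lt_one hspos]; nlinarith
  have hq0 : 0 ≤ q := by positivity
  have htsum : ∑' j : ℕ, ((1 - δ) / (1 + δ)) ^ (2 * j) *
      ((1 - δ ^ 2) / ((1 - δ) * s)) ^ (2 * (j + 1)) = A * (1 - q)⁻¹ := by
    rw [tsum_congr hterm, tsum_mul_left, tsum_geometric_of_lt_one hq0 hq1]
  rw [htsum]
  have h1q : 1 - q = 2 * δ / (1 + δ ^ 2) := by
    rw [hq]; field_simp; ring
  rw [h1q, hA]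
  field_simp
  ring
end

section
/- Let (r_n) be regularly varying with index ρ > 0 and define r^inv_n = min{i ≥ 1 : r_i ≥ n}. Then (r^inv_n) is regularly varying with index 1/ρ, and r^inv_{⌊r_n⌋} ~ n and r_{⌊r^inv_n⌋} ~ n as n → ∞. -/
/-- A sequence `(r_n)_{n ≥ 1}` of positive reals is regularly varying with index `ρ`
if `r n = n^ρ * ℓ n` with `ℓ` slowly varying: `ℓ ⌊λn⌋ / ℓ n → 1` for all `λ > 0`. -/
def RVSeq (r : ℕ → ℝ) (ρ : ℝ) : Prop :=
  (∀ n, 1 ≤ n → 0 < r n) ∧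
  ∃ l : ℕ → ℝ, (∀ n, 1 ≤ n → r n = (n : ℝ) ^ ρ * l n) ∧
    ∀ lam : ℝ, 0 < lam →
      Filter.Tendsto (fun n : ℕ => l ⌊lam * (n : ℝ)⌋₊ / l n) Filter.atTop (nhds 1)


/-- The generalized inverse of a sequence: `rinv r n` is the least index `i ≥ 1` with
`r i ≥ n`. -/
noncomputable def rinv (r : ℕ → ℝ) (n : ℕ) : ℕ :=
  sInf {i : ℕ | 1 ≤ i ∧ (n : ℝ) ≤ r i}

/-!
Write `log r n = ρ log n + L n` with `L = log ∘ ℓ`. Egorov's theorem makes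
`L ⌊s j⌋₊ - L j → 0` uniform in `s ∈ [1, 2K + 2]` off a set of measure `1/8`; since the windows
`{s | ⌊s j⌋₊ = n}`, `n/2 ≤ j ≤ n`, are disjoint of length `≥ 1/n`, some multiplier `j` meets the
good set in the windows of both `n` and `m`, so `L` varies little on `[n, K n]`. Chaining over
factors 2 shows that `r` is almost increasing and tends to infinity, whence
`max_{i ≤ c k} r i ≤ θ r k` eventually for `θ > c ^ ρ`. Now `rinv` is squeezed: for `c ^ ρ > λ`,
`r ⌊c m⌋₊ > λ r m` puts `rinv ⌊λ n⌋₊` below `c · rinv n`, and for `c ^ ρ < λ` the bound on the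
maximum forbids `rinv ⌊λ n⌋₊ ≤ c · rinv n`; the other two asymptotics come from the same two
comparisons.
-/

open Filter Topology MeasureTheory Set
open scoped Finset

lemma tendsto_natFloor_mul_div_natCast {lam : ℝ} (hlam : 0 ≤ lam) :
    Tendsto (fun n : ℕ => (⌊lam * n⌋₊ : ℝ) / n) atTop (𝓝 lam) :=
  (tendsto_nat_floor_mul_div_atTop hlam).comp tendsto_natCast_atTop_atTop

lemma tendsto_natFloor_mul_natCast_atTop {lam : ℝ} (hlam : 0 < lam) :
    Tendsto (fun n : ℕ => ⌊lam * n⌋₊) atTop atTop :=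
  tendsto_nat_floor_atTop.comp (tendsto_natCast_atTop_atTop.const_mul_atTop hlam)

lemma tendsto_nhds_of_pos_bounds {f : ℕ → ℝ} {c : ℝ} (hc : 0 < c)
    (hlo : ∀ a, 0 < a → a < c → ∀ᶠ n in atTop, a < f n)
    (hhi : ∀ b, c < b → ∀ᶠ n in atTop, f n < b) : Tendsto f atTop (𝓝 c) := by
  refine tendsto_order.2 ⟨fun a ha => ?_, hhi⟩
  filter_upwards [hlo (max a (c / 2)) (lt_max_of_lt_right (half_pos hc))
    (max_lt ha (half_lt_self hc))] with n hn
  exact (le_max_left _ _).trans_lt hn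

lemma natFloor_mul_eq_of_mem_Ico {a j : ℕ} (hj : 0 < j) {s : ℝ}
    (hs : s ∈ Ico ((a : ℝ) / j) ((a + 1) / j)) : ⌊s * j⌋₊ = a := by
  have hj' : (0 : ℝ) < j := Nat.cast_pos.2 hj
  rw [Nat.floor_eq_iff (mul_nonneg ((div_nonneg a.cast_nonneg hj'.le).trans hs.1) hj'.le)]
  exact ⟨(div_le_iff₀ hj').1 hs.1, (lt_div_iff₀ hj').1 hs.2⟩

lemma Ico_div_subset_Icc {a j b : ℕ} (hja : j ≤ a) (hb : a + 1 ≤ b * j) :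
    Ico ((a : ℝ) / j) ((a + 1) / j) ⊆ Icc 1 b := by
  have hj : (0 : ℝ) < j := Nat.cast_pos.2 (Nat.pos_of_ne_zero (by rintro rfl; omega))
  refine Ico_subset_Icc_self.trans (Icc_subset_Icc ((one_le_div hj).2 (by exact_mod_cast hja)) ?_)
  rw [div_le_iff₀ hj]
  exact_mod_cast hb

lemma volume_Ico_div (a j : ℕ) :
    volume (Ico ((a : ℝ) / j) ((a + 1) / j)) = ENNReal.ofReal (1 / j) := by
  rw [Real.volume_Ico, add_div, add_sub_cancel_left]

lemma pairwiseDisjoint_Ico_div (a : ℕ) :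
    (Set.Iic a).PairwiseDisjoint fun j : ℕ => Ico ((a : ℝ) / j) ((a + 1) / j) := by
  have key : ∀ i j : ℕ, i < j → j ≤ a →
      Disjoint (Ico ((a : ℝ) / i) ((a + 1) / i)) (Ico ((a : ℝ) / j) ((a + 1) / j)) := by
    intro i j hij hja
    rcases Nat.eq_zero_or_pos i with rfl | hi
    · simp
    have hle : ((a : ℝ) + 1) / j ≤ a / i := by
      rw [div_le_div_iff₀ (by exact_mod_cast hi.trans hij) (by exact_mod_cast hi)]
      have : (a + 1) * i ≤ a * j := by nlinarith
      exact_mod_cast this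
    exact (Ico_disjoint_Ico_same.mono_left (Ico_subset_Ico_right hle)).symm
  intro i hi j hj hij
  rcases hij.lt_or_gt with h | h
  · exact key i j h hj
  · exact (key j i h hi).symm

lemma card_nsmul_le_measure_of_pairwiseDisjoint {α ι : Type*} [MeasurableSpace α]
    {μ : Measure α} {J : Finset ι} {W : ι → Set α} {t : Set α} {w : ENNReal}
    (hd : (J : Set ι).PairwiseDisjoint W) (hm : ∀ j ∈ J, MeasurableSet (W j))
    (hw : ∀ j ∈ J, w ≤ μ (W j)) (ht : ∀ j ∈ J, W j ⊆ t) : #J • w ≤ μ t :=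
  calc #J • w ≤ ∑ j ∈ J, μ (W j) := J.card_nsmul_le_sum _ _ hw
    _ = μ (⋃ j ∈ J, W j) := (measure_biUnion_finset hd hm).symm
    _ ≤ μ t := measure_mono (iUnion₂_subset ht)

open Classical in
lemma card_filter_Ico_div_subset_div_le {n a : ℕ} (hna : n ≤ a) {J : Finset ℕ}
    (hJ : ∀ j ∈ J, 1 ≤ j ∧ j ≤ n) {t : Set ℝ} {δ : ℝ} (hδ : 0 ≤ δ)
    (ht : volume t ≤ ENNReal.ofReal δ) :
    (#(J.filter fun j : ℕ => Ico ((a : ℝ) / j) ((a + 1) / j) ⊆ t) : ℝ) / n ≤ δ := by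
  set B := J.filter fun j : ℕ => Ico ((a : ℝ) / j) ((a + 1) / j) ⊆ t
  have hB : ∀ j ∈ B, 1 ≤ j ∧ j ≤ n := fun j hj => hJ j (Finset.mem_filter.1 hj).1
  have hcount := card_nsmul_le_measure_of_pairwiseDisjoint (μ := volume) (J := B)
    (w := ENNReal.ofReal (1 / n))
    ((pairwiseDisjoint_Ico_div a).subset fun j hj => Set.mem_Iic.2 ((hB j hj).2.trans hna))
    (fun _ _ => measurableSet_Ico)
    (fun j hj => by
      rw [volume_Ico_div]
      exact ENNReal.ofReal_le_ofReal (one_div_le_one_div_of_le (by exact_mod_cast (hB j hj).1)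
        (by exact_mod_cast (hB j hj).2)))
    (fun j hj => (Finset.mem_filter.1 hj).2)
  rw [nsmul_eq_mul, ← ENNReal.ofReal_natCast, ← ENNReal.ofReal_mul (Nat.cast_nonneg _),
    mul_one_div] at hcount
  exact (ENNReal.ofReal_le_ofReal_iff hδ).1 (hcount.trans ht)

open Classical in
lemma exists_mem_Icc_not_Ico_div_subset {n m : ℕ} (hn : 1 ≤ n) (hnm : n ≤ m) {t : Set ℝ}
    {δ : ℝ} (hδ0 : 0 ≤ δ) (hδ : δ < 1 / 4) (ht : volume t ≤ ENNReal.ofReal δ) :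
    ∃ j ∈ Finset.Icc ((n + 1) / 2) n, ¬ Ico ((n : ℝ) / j) ((n + 1) / j) ⊆ t ∧
      ¬ Ico ((m : ℝ) / j) ((m + 1) / j) ⊆ t := by
  set J := Finset.Icc ((n + 1) / 2) n
  have hJ : ∀ j ∈ J, 1 ≤ j ∧ j ≤ n := fun j hj => by
    have := Finset.mem_Icc.1 hj; omega
  by_contra! h
  have hcard := (Finset.card_le_card fun j hj => Finset.mem_union.2 <|
    (_root_.em _).imp (fun h' => Finset.mem_filter.2 ⟨hj, h'⟩)
      (fun h' => Finset.mem_filter.2 ⟨hj, h j hj h'⟩)).trans (Finset.card_union_le _ _)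
  have hbn := card_filter_Ico_div_subset_div_le le_rfl hJ hδ0 ht
  have hbm := card_filter_Ico_div_subset_div_le hnm hJ hδ0 ht
  have hn0 : (0 : ℝ) < n := by exact_mod_cast hn
  rw [div_le_iff₀ hn0] at hbn hbm
  have hJcard : (n : ℝ) ≤ 2 * #J := by exact_mod_cast (by rw [Nat.card_Icc]; omega : n ≤ 2 * #J)
  have hcard' := (Nat.cast_le (α := ℝ)).2 hcard
  push_cast at hcard'
  nlinarith

/-- Slow variation in additive form: `log ∘ ℓ` for a slowly varying `ℓ`. -/
def AddSlowlyVarying (L : ℕ → ℝ) : Prop :=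
  ∀ s : ℝ, 0 < s → Tendsto (fun n : ℕ => L ⌊s * n⌋₊ - L n) atTop (𝓝 0)

namespace AddSlowlyVarying

variable {L : ℕ → ℝ}

theorem eventually_abs_sub_le (hL : AddSlowlyVarying L) (K : ℕ) {ε : ℝ} (hε : 0 < ε) :
    ∀ᶠ n in atTop, ∀ m, n ≤ m → m ≤ K * n → |L m - L n| < ε := by
  set S : Set ℝ := Icc 1 ((2 * K + 2 : ℕ) : ℝ)
  set f : ℕ → ℝ → ℝ := fun j s => L ⌊s * j⌋₊ - L j
  have hf : ∀ j, StronglyMeasurable (f j) := fun j =>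
    ((measurable_from_top.comp (Nat.measurable_floor.comp (measurable_id.mul_const _))).sub_const
      _).stronglyMeasurable
  obtain ⟨t, -, -, ht, hunif⟩ := tendstoUniformlyOn_of_ae_tendsto (μ := volume) (g := fun _ => 0)
    (s := S) hf stronglyMeasurable_const measurableSet_Icc measure_Icc_lt_top.ne
    (ae_of_all _ fun s hs => hL s (zero_lt_one.trans_le hs.1)) (by norm_num : (0 : ℝ) < 1 / 8)
  obtain ⟨k, hk⟩ := eventually_atTop.1 (Metric.tendstoUniformlyOn_iff.1 hunif (ε / 2) (half_pos hε))
  filter_upwards [eventually_ge_atTop (2 * k + 1)] with n hn m hnm hmK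
  obtain ⟨j, hjJ, hjn, hjm⟩ :=
    exists_mem_Icc_not_Ico_div_subset (by omega) hnm (by norm_num) (by norm_num) ht
  have hJ := Finset.mem_Icc.1 hjJ
  have hj1 : 1 ≤ j := by omega
  have hnj : n ≤ 2 * j := by omega
  have hclose : ∀ a, n ≤ a → a ≤ K * n → ¬ Ico ((a : ℝ) / j) ((a + 1) / j) ⊆ t →
      |L a - L j| < ε / 2 := by
    intro a hna haK hnot
    obtain ⟨s, hs, hst⟩ := not_subset.1 hnot
    have hsS : s ∈ S := Ico_div_subset_Icc (hJ.2.trans hna) (by nlinarith) hs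
    have := hk j (by omega) s ⟨hsS, hst⟩
    rwa [dist_zero_left, Real.norm_eq_abs,
      show f j s = L a - L j by simp only [f, natFloor_mul_eq_of_mem_Ico hj1 hs]] at this
  calc |L m - L n| = |(L m - L j) - (L n - L j)| := by ring_nf
    _ ≤ |L m - L j| + |L n - L j| := abs_sub _ _
    _ < ε / 2 + ε / 2 := add_lt_add (hclose m hnm hmK hjm) (hclose n le_rfl (by nlinarith) hjn)
    _ = ε := add_halves ε

theorem eventually_forall_le (hL : AddSlowlyVarying L) {ρ : ℝ} (hρ : 0 < ρ) {ε : ℝ}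
    (hε : 0 < ε) :
    ∀ᶠ i : ℕ in atTop, ∀ n : ℕ, i ≤ n → ρ * Real.log i + L i ≤ ρ * Real.log n + L n + ε := by
  set ε₁ := min ε (ρ * Real.log 2)
  have hε₁ : 0 < ε₁ := lt_min hε (mul_pos hρ (Real.log_pos one_lt_two))
  obtain ⟨N, hN⟩ := eventually_atTop.1 (hL.eventually_abs_sub_le 3 hε₁)
  have hlog_le : ∀ {i n : ℕ}, 1 ≤ i → i ≤ n → ρ * Real.log i ≤ ρ * Real.log n := fun hi hin =>
    mul_le_mul_of_nonneg_left (Real.log_le_log (by exact_mod_cast hi) (by exact_mod_cast hin))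
      hρ.le
  -- Within a factor 3 the bound is the uniform estimate; beyond, halve `n` and gain `ρ log 2 ≥ ε₁`.
  have key : ∀ n i, N ≤ i → 1 ≤ i → i ≤ n →
      ρ * Real.log i + L i ≤ ρ * Real.log n + L n + ε := by
    intro n
    induction n using Nat.strong_induction_on with
    | _ n ih =>
      intro i hNi hi hin
      by_cases hn3 : n ≤ 3 * i
      · have := abs_sub_lt_iff.1 (hN i hNi n hin hn3)
        linarith [hlog_le hi hin, min_le_left ε (ρ * Real.log 2)]
      · have hih := ih (n / 2) (by omega) i hNi hi (by omega)
        have := abs_sub_lt_iff.1 (hN (n / 2) (by omega) n (by omega) (by omega))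
        have hhalf : Real.log (n / 2 : ℕ) ≤ Real.log n - Real.log 2 := by
          rw [← Real.log_div (by exact_mod_cast (by omega : n ≠ 0)) two_ne_zero]
          exact Real.log_le_log (by exact_mod_cast (by omega : 0 < n / 2)) Nat.cast_div_le
        nlinarith [min_le_right ε (ρ * Real.log 2)]
  filter_upwards [eventually_ge_atTop N, eventually_ge_atTop 1] with i hNi hi n hin
    using key n i hNi hi hin

end AddSlowlyVarying

section rinv

variable {r : ℕ → ℝ}

theorem rinv_spec (hr : Tendsto r atTop atTop) (n : ℕ) :
    1 ≤ rinv r n ∧ (n : ℝ) ≤ r (rinv r n) :=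
  Nat.sInf_mem (((eventually_ge_atTop 1).and (hr.eventually_ge_atTop (n : ℝ))).exists)

theorem rinv_le {i n : ℕ} (hi : 1 ≤ i) (h : (n : ℝ) ≤ r i) : rinv r n ≤ i :=
  Nat.sInf_le ⟨hi, h⟩

theorem apply_lt_of_lt_rinv {i n : ℕ} (hi : 1 ≤ i) (h : i < rinv r n) : r i < n :=
  lt_of_not_ge fun h' => (rinv_le hi h').not_gt h

theorem tendsto_rinv_atTop (hr : Tendsto r atTop atTop) : Tendsto (rinv r) atTop atTop := by
  refine tendsto_atTop.2 fun M => ?_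
  filter_upwards [(eventually_all_finset (Finset.range M)).2 fun i _ =>
    tendsto_natCast_atTop_atTop.eventually_gt_atTop (r i)] with n hn
  by_contra! h
  exact (hn _ (Finset.mem_range.2 h)).not_ge (rinv_spec hr n).2

end rinv

theorem rvSeq_of_tendsto_div {s : ℕ → ℝ} {σ : ℝ} (hpos : ∀ n, 1 ≤ n → 0 < s n)
    (hs : ∀ lam : ℝ, 0 < lam →
      Tendsto (fun n : ℕ => s ⌊lam * n⌋₊ / s n) atTop (𝓝 (lam ^ σ))) :
    RVSeq s σ := by
  refine ⟨hpos, fun n => s n / (n : ℝ) ^ σ, fun n hn => ?_, fun lam hlam => ?_⟩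
  · rw [mul_div_cancel₀ _ (Real.rpow_pos_of_pos (by exact_mod_cast hn) σ).ne']
  · have hσ : lam ^ σ ≠ 0 := (Real.rpow_pos_of_pos hlam σ).ne'
    have := (hs lam hlam).div
      ((tendsto_natFloor_mul_div_natCast hlam.le).rpow_const (Or.inl hlam.ne')) hσ
    rw [div_self hσ] at this
    refine this.congr fun n => ?_
    simp only [Pi.div_apply]
    rw [Real.div_rpow (Nat.cast_nonneg _) (Nat.cast_nonneg _), div_div_div_comm]

namespace RVSeq

variable {r : ℕ → ℝ} {ρ : ℝ}

theorem tendsto_div (hr : RVSeq r ρ) {lam : ℝ} (hlam : 0 < lam) :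
    Tendsto (fun n : ℕ => r ⌊lam * n⌋₊ / r n) atTop (𝓝 (lam ^ ρ)) := by
  obtain ⟨-, l, hrl, hl⟩ := hr
  have := ((tendsto_natFloor_mul_div_natCast hlam.le).rpow_const (p := ρ) (Or.inl hlam.ne')).mul
    (hl lam hlam)
  rw [mul_one] at this
  refine this.congr' ?_
  filter_upwards [(tendsto_natFloor_mul_natCast_atTop hlam).eventually_ge_atTop 1,
    eventually_ge_atTop 1] with n h1 hn
  rw [hrl _ h1, hrl _ hn, Real.div_rpow (Nat.cast_nonneg _) (Nat.cast_nonneg _),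
    mul_div_mul_comm]

theorem exists_addSlowlyVarying_log (hr : RVSeq r ρ) :
    ∃ L : ℕ → ℝ, AddSlowlyVarying L ∧ ∀ n, 1 ≤ n → Real.log (r n) = ρ * Real.log n + L n := by
  obtain ⟨hpos, l, hrl, hl⟩ := hr
  have hnρ : ∀ n : ℕ, 1 ≤ n → 0 < (n : ℝ) ^ ρ := fun n hn =>
    Real.rpow_pos_of_pos (by exact_mod_cast hn) ρ
  have hlpos : ∀ n, 1 ≤ n → 0 < l n := fun n hn =>
    pos_of_mul_pos_right (hrl n hn ▸ hpos n hn) (hnρ n hn).le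
  refine ⟨fun n => Real.log (l n), fun s hs => ?_, fun n hn => ?_⟩
  · have := (hl s hs).log one_ne_zero
    rw [Real.log_one] at this
    refine this.congr' ?_
    filter_upwards [(tendsto_natFloor_mul_natCast_atTop hs).eventually_ge_atTop 1,
      eventually_ge_atTop 1] with n h1 hn
    exact Real.log_div (hlpos _ h1).ne' (hlpos n hn).ne'
  · rw [hrl n hn, Real.log_mul (hnρ n hn).ne' (hlpos n hn).ne',
      Real.log_rpow (by exact_mod_cast hn)]

theorem eventually_le_mul (hr : RVSeq r ρ) (hρ : 0 < ρ) {A : ℝ} (hA : 1 < A) :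
    ∀ᶠ i : ℕ in atTop, ∀ n, i ≤ n → r i ≤ A * r n := by
  obtain ⟨L, hL, hlog⟩ := hr.exists_addSlowlyVarying_log
  filter_upwards [hL.eventually_forall_le hρ (Real.log_pos hA), eventually_ge_atTop 1]
    with i hi hi1 n hin
  have hn1 := hi1.trans hin
  rw [← Real.log_le_log_iff (hr.1 i hi1) (mul_pos (zero_lt_one.trans hA) (hr.1 n hn1)),
    Real.log_mul (by positivity) (hr.1 n hn1).ne', hlog i hi1, hlog n hn1]
  linarith [hi n hin]

theorem tendsto_atTop (hr : RVSeq r ρ) (hρ : 0 < ρ) : Tendsto r atTop atTop := by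
  obtain ⟨L, hL, hlog⟩ := hr.exists_addSlowlyVarying_log
  obtain ⟨i, hi, hi1⟩ :=
    ((hL.eventually_forall_le (half_pos hρ) one_pos).and (eventually_ge_atTop 1)).exists
  -- Comparing with `ρ / 2` instead of `ρ` leaves a growing term `(ρ / 2) log n`.
  have hlog_r : Tendsto (fun n : ℕ => Real.log (r n)) atTop atTop := by
    refine tendsto_atTop_mono' _ ?_ <|
      ((Real.tendsto_log_atTop.comp tendsto_natCast_atTop_atTop).const_mul_atTop
        (half_pos hρ)).atTop_add (tendsto_const_nhds (x := ρ / 2 * Real.log i + L i - 1))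
    filter_upwards [eventually_ge_atTop i] with n hin
    rw [hlog n (hi1.trans hin)]
    have := hi n hin
    simp only [Function.comp_apply]
    linarith
  refine (Real.tendsto_exp_atTop.comp hlog_r).congr' ?_
  filter_upwards [eventually_ge_atTop 1] with n hn
  exact Real.exp_log (hr.1 n hn)

theorem eventually_forall_le_mul (hr : RVSeq r ρ) (hρ : 0 < ρ) {c θ : ℝ} (hc : 0 < c)
    (hcθ : c ^ ρ < θ) : ∀ᶠ k : ℕ in atTop, ∀ i : ℕ, (i : ℝ) ≤ c * k → r i ≤ θ * r k := by
  obtain ⟨B, hcB, hBθ⟩ := exists_between hcθ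
  have hB : 0 < B := (Real.rpow_pos_of_pos hc ρ).trans hcB
  have hθ : 0 < θ := hB.trans hBθ
  obtain ⟨N, hN⟩ := eventually_atTop.1 (hr.eventually_le_mul hρ ((one_lt_div hB).2 hBθ))
  have hsmall : ∀ᶠ k : ℕ in atTop, ∀ i ∈ Finset.range N, r i ≤ θ * r k :=
    (eventually_all_finset _).2 fun i _ =>
      ((hr.tendsto_atTop hρ).const_mul_atTop hθ).eventually_ge_atTop (r i)
  filter_upwards [hsmall, (tendsto_order.1 (hr.tendsto_div hc)).2 B hcB, eventually_ge_atTop 1]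
    with k hk hkB hk1 i hi
  by_cases hiN : i < N
  · exact hk i (Finset.mem_range.2 hiN)
  calc r i ≤ θ / B * r ⌊c * k⌋₊ := hN i (not_lt.1 hiN) _ (Nat.le_floor hi)
    _ ≤ θ / B * (B * r k) := by
        gcongr
        exact ((div_lt_iff₀ (hr.1 k hk1)).1 hkB).le
    _ = θ * r k := by rw [← mul_assoc, div_mul_cancel₀ _ hB.ne']

theorem tendsto_apply_rinv_div (hr : RVSeq r ρ) (hρ : 0 < ρ) :
    Tendsto (fun n : ℕ => r (rinv r n) / n) atTop (𝓝 1) := by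
  have htop := hr.tendsto_atTop hρ
  refine tendsto_order.2 ⟨fun a ha => ?_, fun b hb => ?_⟩
  · filter_upwards [eventually_ge_atTop 1] with n hn
    exact ha.trans_le ((one_le_div (by exact_mod_cast hn)).2 (rinv_spec htop n).2)
  have hb0 : 0 < b := zero_lt_one.trans hb
  obtain ⟨w, hbw, hw1⟩ := exists_between <|
    Real.rpow_lt_one (inv_nonneg.2 hb0.le) (inv_lt_one_of_one_lt₀ hb) (inv_pos.2 hρ)
  have hw0 : 0 < w := (Real.rpow_nonneg (inv_nonneg.2 hb0.le) _).trans_lt hbw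
  have hwρ : b⁻¹ < w ^ ρ := (Real.rpow_inv_lt_iff_of_pos (inv_nonneg.2 hb0.le) hw0.le hρ).1 hbw
  -- `⌊w m⌋₊` lies below `m = rinv r n`, so `r ⌊w m⌋₊ < n`, while `r m / r ⌊w m⌋₊ → w ^ (-ρ) < b`.
  have hev : ∀ᶠ m : ℕ in atTop, b⁻¹ * r m < r ⌊w * m⌋₊ ∧ 1 ≤ ⌊w * m⌋₊ ∧ ⌊w * m⌋₊ < m := by
    filter_upwards [(tendsto_order.1 (hr.tendsto_div hw0)).1 _ hwρ,
      (tendsto_natFloor_mul_natCast_atTop hw0).eventually_ge_atTop 1, eventually_ge_atTop 1]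
      with m hm h1 hm1
    refine ⟨(lt_div_iff₀ (hr.1 m hm1)).1 hm, h1, (Nat.floor_lt (by positivity)).2 ?_⟩
    exact mul_lt_of_lt_one_left (by exact_mod_cast hm1) hw1
  filter_upwards [(tendsto_rinv_atTop htop).eventually hev, eventually_ge_atTop 1]
    with n ⟨hlt, h1, hlt'⟩ hn
  rw [div_lt_iff₀ (by exact_mod_cast hn), ← inv_mul_lt_iff₀ hb0]
  exact hlt.trans (apply_lt_of_lt_rinv h1 hlt')

theorem eventually_mul_lt_rinv (hr : RVSeq r ρ) (hρ : 0 < ρ) {a θ : ℝ} (ha : 0 < a)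
    (haθ : a ^ ρ < θ) {k x : ℕ → ℕ} (hk : Tendsto k atTop atTop)
    (hx : ∀ᶠ n in atTop, θ * r (k n) < x n) : ∀ᶠ n in atTop, a * k n < rinv r (x n) := by
  filter_upwards [hk.eventually (hr.eventually_forall_le_mul hρ ha haθ), hx] with n hle hlt
  by_contra! h
  linarith [hle _ h, (rinv_spec (hr.tendsto_atTop hρ) (x n)).2]

theorem eventually_rinv_floor_mul_le (hr : RVSeq r ρ) (hρ : 0 < ρ) {lam c : ℝ} (hlam : 0 < lam)
    (hc : 0 < c) (hlc : lam < c ^ ρ) :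
    ∀ᶠ n : ℕ in atTop, (rinv r ⌊lam * n⌋₊ : ℝ) ≤ c * rinv r n := by
  have htop := hr.tendsto_atTop hρ
  have hev : ∀ᶠ m : ℕ in atTop, lam * r m < r ⌊c * m⌋₊ ∧ 1 ≤ ⌊c * m⌋₊ := by
    filter_upwards [(tendsto_order.1 (hr.tendsto_div hc)).1 _ hlc,
      (tendsto_natFloor_mul_natCast_atTop hc).eventually_ge_atTop 1, eventually_ge_atTop 1]
      with m hm h1 hm1
    exact ⟨(lt_div_iff₀ (hr.1 m hm1)).1 hm, h1⟩
  filter_upwards [(tendsto_rinv_atTop htop).eventually hev] with n ⟨hlt, h1⟩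
  have hle : rinv r ⌊lam * n⌋₊ ≤ ⌊c * rinv r n⌋₊ := rinv_le h1 <| by
    calc (⌊lam * n⌋₊ : ℝ) ≤ lam * n := Nat.floor_le (by positivity)
      _ ≤ lam * r (rinv r n) := by gcongr; exact (rinv_spec htop n).2
      _ ≤ _ := hlt.le
  calc (rinv r ⌊lam * n⌋₊ : ℝ) ≤ ⌊c * rinv r n⌋₊ := by exact_mod_cast hle
    _ ≤ c * rinv r n := Nat.floor_le (by positivity)

theorem tendsto_rinv_floor_div (hr : RVSeq r ρ) (hρ : 0 < ρ) :
    Tendsto (fun n : ℕ => (rinv r ⌊r n⌋₊ : ℝ) / n) atTop (𝓝 1) := by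
  have htop := hr.tendsto_atTop hρ
  refine tendsto_nhds_of_pos_bounds one_pos (fun a ha ha1 => ?_) fun b hb => ?_
  · obtain ⟨θ, haθ, hθ1⟩ := exists_between (Real.rpow_lt_one ha.le ha1 hρ)
    have hx : ∀ᶠ n in atTop, θ * r n < ⌊r n⌋₊ := by
      filter_upwards [(htop.const_mul_atTop (sub_pos.2 hθ1)).eventually_ge_atTop 1] with n hn
      linarith [Nat.sub_one_lt_floor (r n)]
    filter_upwards [hr.eventually_mul_lt_rinv hρ ha haθ tendsto_id hx, eventually_ge_atTop 1]
      with n hn hn1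
    exact (lt_div_iff₀ (by exact_mod_cast hn1)).2 hn
  · filter_upwards [eventually_ge_atTop 1] with n hn
    refine lt_of_le_of_lt ((div_le_one (by exact_mod_cast hn)).2 ?_) hb
    exact_mod_cast rinv_le hn (Nat.floor_le (hr.1 n hn).le)

theorem tendsto_rinv_div (hr : RVSeq r ρ) (hρ : 0 < ρ) {lam : ℝ} (hlam : 0 < lam) :
    Tendsto (fun n : ℕ => (rinv r ⌊lam * n⌋₊ : ℝ) / rinv r n) atTop (𝓝 (lam ^ (1 / ρ))) := by
  have htop := hr.tendsto_atTop hρ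
  have hrinv_pos : ∀ n, (0 : ℝ) < rinv r n := fun n => by exact_mod_cast (rinv_spec htop n).1
  rw [one_div]
  refine tendsto_nhds_of_pos_bounds (Real.rpow_pos_of_pos hlam _) (fun a ha hal => ?_)
    fun b hb => ?_
  · obtain ⟨θ, haθ, hθl⟩ :=
      exists_between ((Real.lt_rpow_inv_iff_of_pos ha.le hlam.le hρ).1 hal)
    -- `θ r (rinv r n) ≈ θ n < ⌊lam n⌋₊`, by `tendsto_apply_rinv_div`.
    have hlim : Tendsto (fun n : ℕ => θ * (r (rinv r n) / n) + 1 / n) atTop (𝓝 (θ * 1 + 0)) :=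
      (tendsto_const_nhds.mul (hr.tendsto_apply_rinv_div hρ)).add
        tendsto_one_div_atTop_nhds_zero_nat
    have hx : ∀ᶠ n in atTop, θ * r (rinv r n) < ⌊lam * n⌋₊ := by
      filter_upwards [(tendsto_order.1 hlim).2 lam (by simpa using hθl), eventually_ge_atTop 1]
        with n hn hn1
      have hn0 : (0 : ℝ) < n := by exact_mod_cast hn1
      rw [mul_div_assoc', ← add_div, div_lt_iff₀ hn0] at hn
      linarith [Nat.sub_one_lt_floor (lam * n)]
    filter_upwards [hr.eventually_mul_lt_rinv hρ ha haθ (tendsto_rinv_atTop htop) hx] with n hn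
    exact (lt_div_iff₀ (hrinv_pos n)).2 hn
  · obtain ⟨c, hlc, hcb⟩ := exists_between hb
    have hc : 0 < c := (Real.rpow_nonneg hlam.le _).trans_lt hlc
    filter_upwards [hr.eventually_rinv_floor_mul_le hρ hlam hc
      ((Real.rpow_inv_lt_iff_of_pos hlam.le hc.le hρ).1 hlc)] with n hn
    rw [div_lt_iff₀ (hrinv_pos n)]
    exact hn.trans_lt (by gcongr; exact hrinv_pos n)

end RVSeq

/-- If `(r_n)` is regularly varying with index `ρ > 0`, then its generalized inverse
is regularly varying with index `1/ρ`, and `rinv ⌊r_n⌋ ~ n`, `r_{rinv n} ~ n`. -/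
theorem rv_inverse (r : ℕ → ℝ) (ρ : ℝ) (hr : RVSeq r ρ) (hρ : 0 < ρ) :
    RVSeq (fun n => (rinv r n : ℝ)) (1 / ρ) ∧
      Filter.Tendsto (fun n => (rinv r ⌊r n⌋₊ : ℝ) / (n : ℝ))
        Filter.atTop (nhds 1) ∧
      Filter.Tendsto (fun n => r (rinv r n) / (n : ℝ))
        Filter.atTop (nhds 1) :=
  ⟨rvSeq_of_tendsto_div (fun n _ => Nat.cast_pos.2 (rinv_spec (hr.tendsto_atTop hρ) n).1)
      fun _ hlam => hr.tendsto_rinv_div hρ hlam,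
    hr.tendsto_rinv_floor_div hρ, hr.tendsto_apply_rinv_div hρ⟩
end

section
/- Let ε_n = n^{-α} for α ∈ (0,1), a_n = n + Σ_{i=1}^n 1/ε_i, c_n = min{i : a_i ≥ n}, b_n = 1/ε_{c_n}. Then a_n ~ n^{1+α}/(1+α), c_n ~ (1+α)^{1/(1+α)} n^{1/(1+α)}, and b_n ~ (1+α)^{α/(1+α)} n^{α/(1+α)} as n → ∞. -/
/-!
Comparing `∑_{i ≤ n} i^α` with `∫₀ⁿ x^α dx` shows that it is `n^{1+α}/(1+α) + O(n^α)`, so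
`a_n ~ n^{1+α}/(1+α)`. By minimality of `c_n`, `a_{c_n - 1} < n ≤ a_{c_n}`, and both bounds are
`~ c_n^{1+α}/(1+α)` because consecutive values of a power are asymptotically equal. Solving
`n ~ c_n^{1+α}/(1+α)` for `c_n`, and then raising to the power `α`, gives the other two claims.
-/

open Filter Asymptotics Finset

theorem Finset.sum_Icc_one_eq_sum_range_succ {M : Type*} [AddCommMonoid M] (f : ℕ → M) (n : ℕ) :
    ∑ i ∈ Icc 1 n, f i = ∑ i ∈ range n, f (i + 1) := by
  rw [range_eq_Ico, sum_Ico_add']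
  rfl

theorem Asymptotics.IsEquivalent.of_le_of_le {ι : Type*} {l : Filter ι} {u v w g : ι → ℝ}
    (hu : u ~[l] g) (hw : w ~[l] g) (huv : ∀ᶠ x in l, u x ≤ v x) (hvw : ∀ᶠ x in l, v x ≤ w x) :
    v ~[l] g := by
  have h_bound : (v - g) =O[l] fun x => |u x - g x| + |w x - g x| := by
    refine IsBigO.of_bound' ?_
    filter_upwards [huv, hvw] with x hux hvx
    simp only [Pi.sub_apply, Real.norm_eq_abs]
    rw [abs_of_nonneg (by positivity : 0 ≤ |u x - g x| + |w x - g x|)]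
    exact abs_le.2 ⟨by linarith [neg_abs_le (u x - g x), abs_nonneg (w x - g x)],
      by linarith [le_abs_self (w x - g x), abs_nonneg (u x - g x)]⟩
  exact h_bound.trans_isLittleO (hu.isLittleO.abs_left.add hw.isLittleO.abs_left)

section NatCastRpow

theorem eventually_natCast_rpow_ne_zero (p : ℝ) : ∀ᶠ n : ℕ in atTop, (n : ℝ) ^ p ≠ 0 := by
  filter_upwards [eventually_gt_atTop 0] with n hn
  positivity

theorem isLittleO_natCast_rpow_rpow {s t : ℝ} (hst : s < t) :
    (fun n : ℕ => (n : ℝ) ^ s) =o[atTop] fun n => (n : ℝ) ^ t := by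
  refine (isLittleO_iff_tendsto' ((eventually_natCast_rpow_ne_zero t).mono
    fun n hn h => absurd h hn)).2 ?_
  refine ((tendsto_rpow_neg_atTop (sub_pos.2 hst)).comp tendsto_natCast_atTop_atTop).congr' ?_
  filter_upwards [eventually_gt_atTop 0] with n hn
  rw [Function.comp_apply, ← Real.rpow_sub (by exact_mod_cast hn), neg_sub]

theorem isLittleO_natCast_rpow_rpow_div {s t : ℝ} (hst : s < t) (ht : t ≠ 0) :
    (fun n : ℕ => (n : ℝ) ^ s) =o[atTop] fun n => (n : ℝ) ^ t / t := by
  simpa only [div_eq_inv_mul] using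
    (isLittleO_natCast_rpow_rpow hst).const_mul_right' (isUnit_iff_ne_zero.2 (inv_ne_zero ht))

theorem isEquivalent_natCast_succ_rpow (β : ℝ) :
    (fun m : ℕ => ((m + 1 : ℕ) : ℝ) ^ β) ~[atTop] fun m => (m : ℝ) ^ β := by
  have h_succ : (fun m : ℕ => (m : ℝ) + 1) ~[atTop] fun m => (m : ℝ) :=
    IsEquivalent.refl.add_const_of_norm_tendsto_atTop
      (tendsto_norm_atTop_atTop.comp tendsto_natCast_atTop_atTop)
  push_cast
  exact h_succ.rpow fun m => Nat.cast_nonneg m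

end NatCastRpow

section SumRpow

variable {α : ℝ}

theorem integral_zero_natCast_rpow (hα : 0 ≤ α) (n : ℕ) :
    ∫ x in (0 : ℝ)..n, x ^ α = (n : ℝ) ^ (α + 1) / (α + 1) := by
  rw [integral_rpow (Or.inl (by linarith)), Real.zero_rpow (by linarith), sub_zero]

theorem rpow_div_le_sum_Icc_rpow (hα : 0 ≤ α) (n : ℕ) :
    (n : ℝ) ^ (α + 1) / (α + 1) ≤ ∑ i ∈ Icc 1 n, (i : ℝ) ^ α := by
  have h_int := ((Real.monotoneOn_rpow_Ici_of_exponent_nonneg hα).mono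
    (Set.Icc_subset_Ici_self : Set.Icc (0 : ℝ) (0 + n) ⊆ _)).integral_le_sum
  rw [← integral_zero_natCast_rpow hα, sum_Icc_one_eq_sum_range_succ]
  simpa using h_int

theorem sum_Icc_rpow_le (hα : 0 ≤ α) (n : ℕ) :
    ∑ i ∈ Icc 1 n, (i : ℝ) ^ α ≤ (n : ℝ) ^ (α + 1) / (α + 1) + (n : ℝ) ^ α := by
  have h_int := ((Real.monotoneOn_rpow_Ici_of_exponent_nonneg hα).mono
    (Set.Icc_subset_Ici_self : Set.Icc (0 : ℝ) (0 + n) ⊆ _)).sum_le_integral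
  have h_shift := (sum_range_succ' (fun i : ℕ => (i : ℝ) ^ α) n).symm.trans
    (sum_range_succ (fun i : ℕ => (i : ℝ) ^ α) n)
  have h_zero : (0 : ℝ) ≤ ((0 : ℕ) : ℝ) ^ α := Real.rpow_nonneg (Nat.cast_nonneg 0) α
  simp only [zero_add, integral_zero_natCast_rpow hα] at h_int
  rw [sum_Icc_one_eq_sum_range_succ]
  push_cast at h_shift h_zero ⊢
  linarith

theorem isEquivalent_sum_Icc_rpow (hα : 0 ≤ α) :
    (fun n : ℕ => ∑ i ∈ Icc 1 n, (i : ℝ) ^ α) ~[atTop] fun n => (n : ℝ) ^ (α + 1) / (α + 1) :=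
  IsEquivalent.refl.of_le_of_le
    (IsEquivalent.refl.add_isLittleO (isLittleO_natCast_rpow_rpow_div (lt_add_one α) (by linarith)))
    (Eventually.of_forall (rpow_div_le_sum_Icc_rpow hα)) (Eventually.of_forall (sum_Icc_rpow_le hα))

theorem isEquivalent_natCast_add_sum_Icc_rpow (hα : 0 < α) :
    (fun n : ℕ => (n : ℝ) + ∑ i ∈ Icc 1 n, (i : ℝ) ^ α) ~[atTop]
      fun n => (n : ℝ) ^ (1 + α) / (1 + α) := by
  have h_lin := isLittleO_natCast_rpow_rpow_div (by linarith : (1 : ℝ) < 1 + α) (by linarith)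
  simp only [Real.rpow_one] at h_lin
  rw [add_comm 1 α] at h_lin ⊢
  exact h_lin.add_isEquivalent (isEquivalent_sum_Icc_rpow hα.le)

end SumRpow

section FirstPassage

variable {a : ℕ → ℝ}

theorem tendsto_sInf_le_atTop (ha : Tendsto a atTop atTop) :
    Tendsto (fun n : ℕ => sInf {i | (n : ℝ) ≤ a i}) atTop atTop := by
  refine tendsto_atTop.2 fun M => ?_
  have h_large : ∀ᶠ n : ℕ in atTop, ∀ i ∈ range M, a i < n :=
    (range M).eventually_all.2 fun i _ => tendsto_natCast_atTop_atTop.eventually_gt_atTop (a i)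
  filter_upwards [h_large] with n hn
  by_contra! h_lt
  exact (hn _ (mem_range.2 h_lt)).not_ge (Nat.sInf_mem (ha.eventually_ge_atTop (n : ℝ)).exists)

theorem isEquivalent_natCast_comp_sInf_le {g : ℕ → ℝ} (ha : Tendsto a atTop atTop)
    (hag : a ~[atTop] g) (hg : (fun m => g (m + 1)) ~[atTop] g) :
    (fun n : ℕ => (n : ℝ)) ~[atTop] fun n => g (sInf {i | (n : ℝ) ≤ a i}) := by
  set c : ℕ → ℕ := fun n => sInf {i | (n : ℝ) ≤ a i}
  have hc_top : Tendsto c atTop atTop := tendsto_sInf_le_atTop ha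
  have hc_pred_top : Tendsto (fun n => c n - 1) atTop atTop :=
    (tendsto_sub_atTop_nat 1).comp hc_top
  have h_le : ∀ n : ℕ, (n : ℝ) ≤ a (c n) := fun n =>
    Nat.sInf_mem (ha.eventually_ge_atTop (n : ℝ)).exists
  have h_pred_le : ∀ᶠ n : ℕ in atTop, a (c n - 1) ≤ n := by
    filter_upwards [hc_top.eventually_ge_atTop 1] with n hn
    have h_pred_lt : c n - 1 < c n := by omega
    exact (not_le.1 (Nat.notMem_of_lt_sInf (s := {i | (n : ℝ) ≤ a i}) h_pred_lt)).le
  have h_pred : (fun n => a (c n - 1)) ~[atTop] fun n => g (c n) := by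
    refine (hag.comp_tendsto hc_pred_top).trans
      ((hg.comp_tendsto hc_pred_top).symm.congr_right ?_)
    filter_upwards [hc_top.eventually_ge_atTop 1] with n hn
    simp only [Function.comp_apply, Nat.sub_add_cancel hn]
  exact h_pred.of_le_of_le (hag.comp_tendsto hc_top) h_pred_le (Eventually.of_forall h_le)

end FirstPassage

theorem Asymptotics.IsEquivalent.mul_rpow_inv_of_rpow_div {ι : Type*} {l : Filter ι}
    {u v : ι → ℝ} (hu : 0 ≤ u) (hv : 0 ≤ v) {β : ℝ} (hβ : 0 < β)
    (h : v ~[l] fun x => u x ^ β / β) :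
    u ~[l] fun x => (β * v x) ^ β⁻¹ := by
  have h_pow : (fun x => u x ^ β) ~[l] fun x => β * v x := by
    refine ((IsEquivalent.refl (u := fun _ => β)).mul h.symm).congr_left ?_
    exact Eventually.of_forall fun x => by simp [mul_div_cancel₀ _ hβ.ne']
  refine (h_pow.rpow (fun x => mul_nonneg hβ.le (hv x)) (r := β⁻¹)).congr_left ?_
  exact Eventually.of_forall fun x => Real.rpow_rpow_inv (hu x) hβ.ne'

theorem isEquivalent_sInf_le_of_isEquivalent_rpow_div {a : ℕ → ℝ} {β : ℝ} (hβ : 0 < β)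
    (ha : a ~[atTop] fun m => (m : ℝ) ^ β / β) :
    (fun n : ℕ => ((sInf {i | (n : ℝ) ≤ a i} : ℕ) : ℝ)) ~[atTop]
      fun n => β ^ (1 / β) * (n : ℝ) ^ (1 / β) := by
  have ha_top : Tendsto a atTop atTop := ha.symm.tendsto_atTop
    (((tendsto_rpow_atTop hβ).comp tendsto_natCast_atTop_atTop).atTop_div_const hβ)
  have h_passage := isEquivalent_natCast_comp_sInf_le ha_top ha
    ((isEquivalent_natCast_succ_rpow β).div IsEquivalent.refl)
  refine (h_passage.mul_rpow_inv_of_rpow_div (fun n => Nat.cast_nonneg _)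
    (fun n => Nat.cast_nonneg _) hβ).congr_right (Eventually.of_forall fun n => ?_)
  beta_reduce
  rw [Real.mul_rpow hβ.le (Nat.cast_nonneg _), one_div]

theorem power_drift_asymptotics_general (α : ℝ) (hα0 : 0 < α)
    (a : ℕ → ℝ) (b : ℕ → ℝ) (c : ℕ → ℕ)
    (ha : ∀ n, a n = (n : ℝ) + ∑ i ∈ Finset.Icc 1 n, (i : ℝ) ^ α)
    (hc : ∀ n, c n = sInf {i : ℕ | (n : ℝ) ≤ a i})
    (hb : ∀ n, b n = (c n : ℝ) ^ α) :
    Filter.Tendsto (fun n => a n / ((n : ℝ) ^ (1 + α) / (1 + α)))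
        Filter.atTop (nhds 1) ∧
      Filter.Tendsto
        (fun n => (c n : ℝ) / ((1 + α) ^ ((1 : ℝ) / (1 + α)) * (n : ℝ) ^ ((1 : ℝ) / (1 + α))))
        Filter.atTop (nhds 1) ∧
      Filter.Tendsto
        (fun n => b n / ((1 + α) ^ (α / (1 + α)) * (n : ℝ) ^ (α / (1 + α))))
        Filter.atTop (nhds 1) := by
  have hβ : 0 < 1 + α := by linarith
  have ha_equiv : a ~[atTop] fun n => (n : ℝ) ^ (1 + α) / (1 + α) := by
    simpa only [← ha] using isEquivalent_natCast_add_sum_Icc_rpow hα0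
  have hc_equiv : (fun n => (c n : ℝ)) ~[atTop]
      fun n => (1 + α) ^ ((1 : ℝ) / (1 + α)) * (n : ℝ) ^ ((1 : ℝ) / (1 + α)) := by
    simpa only [← hc] using isEquivalent_sInf_le_of_isEquivalent_rpow_div hβ ha_equiv
  have hb_equiv : b ~[atTop] fun n => (1 + α) ^ (α / (1 + α)) * (n : ℝ) ^ (α / (1 + α)) := by
    refine ((hc_equiv.rpow (fun n => by positivity) (r := α)).congr_left
      (.of_forall fun n => (hb n).symm)).congr_right (.of_forall fun n => ?_)
    rw [Pi.pow_apply, Real.mul_rpow (by positivity) (by positivity), ← Real.rpow_mul hβ.le,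
      ← Real.rpow_mul (Nat.cast_nonneg _), one_div_mul_eq_div]
  refine ⟨(isEquivalent_iff_tendsto_one ?_).1 ha_equiv,
    (isEquivalent_iff_tendsto_one ?_).1 hc_equiv, (isEquivalent_iff_tendsto_one ?_).1 hb_equiv⟩
  · exact (eventually_natCast_rpow_ne_zero _).mono fun n hn => div_ne_zero hn hβ.ne'
  all_goals exact (eventually_natCast_rpow_ne_zero _).mono fun n hn =>
    mul_ne_zero (by positivity) hn

/-- For `ε_n = n^{-α}` with `α ∈ (0,1)`, setting `a_n = n + Σ_{i=1}^n 1/ε_i`,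
`c_n = min{i : a_i ≥ n}` and `b_n = 1/ε_{c_n}`, one has
`a_n ~ n^{1+α}/(1+α)`, `c_n ~ (1+α)^{1/(1+α)} n^{1/(1+α)}`, and
`b_n ~ (1+α)^{α/(1+α)} n^{α/(1+α)}` as `n → ∞`. -/
theorem power_drift_asymptotics (α : ℝ) (hα0 : 0 < α) (hα1 : α < 1)
    (a : ℕ → ℝ) (b : ℕ → ℝ) (c : ℕ → ℕ)
    (ha : ∀ n, a n = (n : ℝ) + ∑ i ∈ Finset.Icc 1 n, (i : ℝ) ^ α)
    (hc : ∀ n, c n = sInf {i : ℕ | (n : ℝ) ≤ a i})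
    (hb : ∀ n, b n = (c n : ℝ) ^ α) :
    Filter.Tendsto (fun n => a n / ((n : ℝ) ^ (1 + α) / (1 + α)))
        Filter.atTop (nhds 1) ∧
      Filter.Tendsto
        (fun n => (c n : ℝ) / ((1 + α) ^ ((1 : ℝ) / (1 + α)) * (n : ℝ) ^ ((1 : ℝ) / (1 + α))))
        Filter.atTop (nhds 1) ∧
      Filter.Tendsto
        (fun n => b n / ((1 + α) ^ (α / (1 + α)) * (n : ℝ) ^ (α / (1 + α))))
        Filter.atTop (nhds 1) :=
  power_drift_asymptotics_general α hα0 a b c ha hc hb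
end

section
/- Under the subcritical assumptions (ε regularly varying with index -α, α ∈ [0,1], ε_n → 0 if α = 0, nε_n/log n → ∞ if α = 1), with a_n = n + Σ_{i≤n} ε_i^{-1}, c_n = min{i : a_i ≥ n}, b_n = ε_{c_n}^{-1}, one has n/(b_n² log b_n) → ∞ and c_n²/(n log b_n) → ∞ as n → ∞. -/
open Filter Topology Asymptotics Finset MeasureTheory
open scoped ENNReal

theorem tendsto_div_atTop_of_isLittleO {ι : Type*} {l : Filter ι} {f g : ι → ℝ} (h : f =o[l] g)
    (hf : ∀ᶠ x in l, 0 < f x) (hg : ∀ᶠ x in l, 0 < g x) :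
    Tendsto (fun x => g x / f x) l atTop := by
  have h0 : Tendsto (fun x => f x / g x) l (𝓝[>] 0) :=
    tendsto_nhdsWithin_iff.2 ⟨h.tendsto_div_nhds_zero,
      by filter_upwards [hf, hg] with x hfx hgx using div_pos hfx hgx⟩
  simpa only [Pi.inv_def, inv_div] using h0.inv_tendsto_nhdsGT_zero

theorem isLittleO_rpow_div_log {δ : ℝ} (hδ : 0 < δ) :
    (fun x : ℝ => x ^ (1 - δ)) =o[atTop] fun x => x / Real.log x := by
  refine IsLittleO.of_tendsto_div_atTop ?_
  refine (tendsto_div_atTop_of_isLittleO (isLittleO_log_rpow_atTop hδ)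
    (Real.tendsto_log_atTop.eventually_gt_atTop 0)
    (eventually_gt_atTop 0 |>.mono fun x hx => Real.rpow_pos_of_pos hx δ)).congr' ?_
  filter_upwards [eventually_gt_atTop 0] with x hx
  rw [Real.rpow_sub hx, Real.rpow_one]
  field_simp

theorem isLittleO_sum_Icc {u w : ℕ → ℝ} (h : u =o[atTop] w) {N : ℕ} (hw : MonotoneOn w (Set.Ici N))
    (hw_top : Tendsto (fun m : ℕ => m * w m) atTop atTop) :
    (fun m => ∑ i ∈ Icc 1 m, u i) =o[atTop] fun m => m * w m := by
  refine isLittleO_iff.2 fun η hη => ?_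
  have hwpos : ∀ᶠ m : ℕ in atTop, 0 < w m := by
    filter_upwards [hw_top.eventually_gt_atTop 0] with m hm
    exact pos_of_mul_pos_right hm (Nat.cast_nonneg m)
  obtain ⟨M, hM⟩ := ((h.bound (half_pos hη)).and hwpos).exists_forall_of_atTop
  set C := ∑ i ∈ range (max M N), ‖u i‖
  filter_upwards [hw_top.eventually_ge_atTop (2 / η * C), eventually_ge_atTop (max M N)]
    with m hCm hm
  have hwm : 0 < w m := (hM m (by omega)).2
  have htail : ∀ i ∈ (Icc 1 m).filter (max M N ≤ ·), ‖u i‖ ≤ η / 2 * w m := by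
    intro i hi
    obtain ⟨hi, hMi⟩ := mem_filter.1 hi
    obtain ⟨hbound, hwi⟩ := hM i (by omega)
    calc ‖u i‖ ≤ η / 2 * ‖w i‖ := hbound
      _ = η / 2 * w i := by rw [Real.norm_of_nonneg hwi.le]
      _ ≤ η / 2 * w m := by
        gcongr
        exact hw (Set.mem_Ici.2 (by omega)) (Set.mem_Ici.2 (by omega)) (mem_Icc.1 hi).2
  have hcard : (((Icc 1 m).filter (max M N ≤ ·)).card : ℝ) ≤ m := by
    exact_mod_cast (card_filter_le _ _).trans (Nat.card_Icc 1 m).le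
  calc ‖∑ i ∈ Icc 1 m, u i‖ ≤ ∑ i ∈ Icc 1 m, ‖u i‖ := norm_sum_le _ _
    _ = ∑ i ∈ (Icc 1 m).filter (· < max M N), ‖u i‖ +
        ∑ i ∈ (Icc 1 m).filter (max M N ≤ ·), ‖u i‖ := by
      rw [← sum_filter_add_sum_filter_not _ (· < max M N)]
      simp only [not_lt]
    _ ≤ C + ((Icc 1 m).filter (max M N ≤ ·)).card * (η / 2 * w m) := by
      gcongr
      · exact sum_le_sum_of_subset_of_nonneg (fun i hi => mem_range.2 (mem_filter.1 hi).2)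
          fun _ _ _ => norm_nonneg _
      · exact (sum_le_card_nsmul _ _ _ htail).trans_eq (nsmul_eq_mul _ _)
    _ ≤ η / 2 * (m * w m) + m * (η / 2 * w m) := by
      gcongr
      calc C = η / 2 * (2 / η * C) := by field_simp
        _ ≤ η / 2 * (m * w m) := by gcongr
    _ = η * ‖(m : ℝ) * w m‖ := by
      rw [Real.norm_of_nonneg (by positivity)]; ring

theorem Real.exp_one_le_natCast {n : ℕ} (hn : 3 ≤ n) : Real.exp 1 ≤ n :=
  Real.exp_one_lt_three.le.trans (by exact_mod_cast hn)

theorem Real.one_le_log_natCast {n : ℕ} (hn : 3 ≤ n) : 1 ≤ Real.log n :=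
  (Real.le_log_iff_exp_le (by positivity)).2 (Real.exp_one_le_natCast hn)

theorem monotoneOn_natCast_div_log :
    MonotoneOn (fun n : ℕ => (n : ℝ) / Real.log n) (Set.Ici 3) := by
  intro i hi j hj hij
  have hlog := Real.log_div_self_antitoneOn (Real.exp_one_le_natCast hi)
    (Real.exp_one_le_natCast hj) (by exact_mod_cast hij)
  have hj0 : 0 < Real.log j / j :=
    div_pos (one_pos.trans_le (Real.one_le_log_natCast hj)) (Nat.cast_pos.2 (three_pos.trans_le hj))
  show (i : ℝ) / Real.log i ≤ j / Real.log j
  rw [← inv_div (Real.log i), ← inv_div (Real.log j)]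
  exact inv_anti₀ hj0 hlog

theorem tendsto_natCast_div_log_atTop :
    Tendsto (fun n : ℕ => (n : ℝ) / Real.log n) atTop atTop :=
  (tendsto_div_atTop_of_isLittleO Real.isLittleO_log_id_atTop
    (Real.tendsto_log_atTop.eventually_gt_atTop 0) (eventually_gt_atTop 0)).comp
    tendsto_natCast_atTop_atTop

theorem eventually_le_of_isLittleO_div_log {r : ℕ → ℝ}
    (h : r =o[atTop] fun n : ℕ => (n : ℝ) / Real.log n) : ∀ᶠ n : ℕ in atTop, r n ≤ n := by
  filter_upwards [h.bound one_pos, eventually_ge_atTop 3] with n hn hn3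
  have hlog := Real.one_le_log_natCast hn3
  calc r n ≤ ‖r n‖ := Real.le_norm_self _
    _ ≤ 1 * ‖(n : ℝ) / Real.log n‖ := hn
    _ ≤ n := by
      rw [one_mul, Real.norm_of_nonneg (by positivity)]
      exact div_le_self (Nat.cast_nonneg n) hlog

def SlowlyVaryingSeq (l : ℕ → ℝ) : Prop :=
  ∀ lam : ℝ, 0 < lam → Tendsto (fun n : ℕ => l ⌊lam * (n : ℝ)⌋₊ / l n) atTop (𝓝 1)

theorem exists_le_mul_rpow_of_le_two_rpow_mul_half {l : ℕ → ℝ} {δ : ℝ} (hδ : 0 ≤ δ) {N : ℕ}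
    (hN : 1 ≤ N) (hstep : ∀ n, 2 * N ≤ n → l n ≤ 2 ^ δ * l (n / 2)) :
    ∃ C, ∀ n, N ≤ n → l n ≤ C * (n : ℝ) ^ δ := by
  obtain ⟨C, hC⟩ := ((range (2 * N)).image l).exists_le
  refine ⟨max C 0, fun n => ?_⟩
  induction n using Nat.strong_induction_on with
  | _ n ih =>
    intro hn
    rcases lt_or_ge n (2 * N) with hn2 | hn2
    · have h1 : (1 : ℝ) ≤ (n : ℝ) ^ δ := Real.one_le_rpow (by exact_mod_cast hN.trans hn) hδ
      calc l n ≤ max C 0 := (hC _ (mem_image_of_mem l (mem_range.2 hn2))).trans (le_max_left _ _)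
        _ ≤ max C 0 * (n : ℝ) ^ δ := le_mul_of_one_le_right (le_max_right _ _) h1
    · calc l n ≤ 2 ^ δ * l (n / 2) := hstep n hn2
        _ ≤ 2 ^ δ * (max C 0 * ((n / 2 : ℕ) : ℝ) ^ δ) := by
          gcongr; exact ih _ (by omega) (by omega)
        _ ≤ 2 ^ δ * (max C 0 * ((n : ℝ) / 2) ^ δ) := by
          gcongr; exact Nat.cast_div_le
        _ = max C 0 * (n : ℝ) ^ δ := by
          rw [Real.div_rpow (Nat.cast_nonneg n) zero_le_two]
          field_simp

theorem lintegral_floor_mul_le_sum (f : ℕ → ℝ≥0∞) {m : ℕ} (hm : 0 < m) :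
    ∫⁻ x in Set.Icc (1 / 2 : ℝ) 1, f ⌊x * m⌋₊ ≤
      ∑ i ∈ Icc (m / 2) m, f i * ENNReal.ofReal (1 / m) := by
  have hm' : (0 : ℝ) < m := Nat.cast_pos.2 hm
  calc ∫⁻ x in Set.Icc (1 / 2 : ℝ) 1, f ⌊x * m⌋₊
      ≤ ∫⁻ x in Set.Icc (1 / 2 : ℝ) 1, ∑ i ∈ Icc (m / 2) m,
          (Set.Ico ((i : ℝ) / m) ((i + 1) / m)).indicator (fun _ => f i) x := by
        refine setLIntegral_mono' measurableSet_Icc fun x hx => ?_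
        have hxm : 0 ≤ x * m := by nlinarith [hx.1]
        have hmem : ⌊x * m⌋₊ ∈ Icc (m / 2) m := by
          refine mem_Icc.2 ⟨Nat.le_floor ?_, Nat.floor_le_of_le (by nlinarith [hx.2])⟩
          calc ((m / 2 : ℕ) : ℝ) ≤ m / 2 := Nat.cast_div_le
            _ ≤ x * m := by nlinarith [hx.1]
        have hx' : x ∈ Set.Ico ((⌊x * m⌋₊ : ℝ) / m) ((⌊x * m⌋₊ + 1) / m) :=
          ⟨(div_le_iff₀ hm').2 (Nat.floor_le hxm), (lt_div_iff₀ hm').2 (Nat.lt_floor_add_one _)⟩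
        calc f ⌊x * m⌋₊ = (Set.Ico ((⌊x * m⌋₊ : ℝ) / m) ((⌊x * m⌋₊ + 1) / m)).indicator
              (fun _ => f ⌊x * m⌋₊) x := (Set.indicator_of_mem hx' fun _ => f ⌊x * m⌋₊).symm
          _ ≤ _ := single_le_sum (f := fun i : ℕ =>
              (Set.Ico ((i : ℝ) / m) ((i + 1) / m)).indicator (fun _ => f i) x)
              (fun _ _ => bot_le) hmem
    _ ≤ ∫⁻ x, ∑ i ∈ Icc (m / 2) m,
          (Set.Ico ((i : ℝ) / m) ((i + 1) / m)).indicator (fun _ => f i) x :=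
        setLIntegral_le_lintegral _ _
    _ = ∑ i ∈ Icc (m / 2) m, f i * ENNReal.ofReal (1 / m) := by
        rw [lintegral_finsetSum _ fun i _ => measurable_const.indicator measurableSet_Ico]
        refine sum_congr rfl fun i _ => ?_
        rw [lintegral_indicator_const measurableSet_Ico, Real.volume_Ico]
        congr 2
        ring

namespace SlowlyVaryingSeq

variable {l : ℕ → ℝ}

theorem inv (hl : SlowlyVaryingSeq l) : SlowlyVaryingSeq fun n => (l n)⁻¹ := fun lam hlam => by
  simpa only [inv_div_inv, inv_div, inv_one] using (hl lam hlam).inv₀ one_ne_zero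

theorem tendsto_div_half (hl : SlowlyVaryingSeq l) :
    Tendsto (fun n => l n / l (n / 2)) atTop (𝓝 1) := by
  have hfloor : ∀ n : ℕ, ⌊(2⁻¹ : ℝ) * n⌋₊ = n / 2 := fun n => by
    rw [inv_mul_eq_div, ← Nat.cast_ofNat, Nat.floor_div_natCast, Nat.floor_natCast]
  simpa only [hfloor, inv_div_inv] using hl.inv 2⁻¹ (by norm_num)

theorem eventually_le_rpow (hl : SlowlyVaryingSeq l) (hpos : ∀ n, 1 ≤ n → 0 < l n) {δ : ℝ}
    (hδ : 0 < δ) : ∀ᶠ n : ℕ in atTop, l n ≤ (n : ℝ) ^ δ := by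
  have hstep : ∀ᶠ n : ℕ in atTop, l n ≤ 2 ^ (δ / 2) * l (n / 2) := by
    filter_upwards [hl.tendsto_div_half.eventually_lt_const
      (Real.one_lt_rpow one_lt_two (half_pos hδ)), eventually_ge_atTop 2] with n hn hn2
    rw [div_lt_iff₀ (hpos _ (by omega))] at hn
    exact hn.le
  obtain ⟨N, hN⟩ := hstep.exists_forall_of_atTop
  obtain ⟨C, hC⟩ := exists_le_mul_rpow_of_le_two_rpow_mul_half (half_pos hδ).le
    (le_max_right N 1) fun n hn => hN n (by omega)
  have hgrow := (tendsto_rpow_atTop (half_pos hδ)).comp tendsto_natCast_atTop_atTop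
  filter_upwards [hgrow.eventually_ge_atTop C, eventually_ge_atTop (max N 1)] with n hCn hn
  calc l n ≤ C * (n : ℝ) ^ (δ / 2) := hC n hn
    _ ≤ (n : ℝ) ^ (δ / 2) * (n : ℝ) ^ (δ / 2) := by gcongr; exact hCn
    _ = (n : ℝ) ^ δ := by rw [← Real.rpow_add' (Nat.cast_nonneg n) (by positivity)]; ring_nf

-- Fatou's lemma stands in for the uniform convergence theorem for slowly varying sequences.
theorem eventually_lt_lintegral (hl : SlowlyVaryingSeq l) :
    ∀ᶠ m : ℕ in atTop, ENNReal.ofReal (1 / 4) <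
      ∫⁻ x in Set.Icc (1 / 2 : ℝ) 1, ENNReal.ofReal (l ⌊x * m⌋₊ / l m) := by
  have hmeas : ∀ m : ℕ, Measurable fun x : ℝ => ENNReal.ofReal (l ⌊x * m⌋₊ / l m) := fun m =>
    ENNReal.measurable_ofReal.comp <| (measurable_from_nat (f := fun k => l k / l m)).comp
      (Nat.measurable_floor.comp (measurable_id.mul_const _))
  have hfatou : ENNReal.ofReal (1 / 2) ≤ liminf (fun m : ℕ =>
      ∫⁻ x in Set.Icc (1 / 2 : ℝ) 1, ENNReal.ofReal (l ⌊x * m⌋₊ / l m)) atTop := by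
    have hlim : ∀ x ∈ Set.Icc (1 / 2 : ℝ) 1,
        liminf (fun m : ℕ => ENNReal.ofReal (l ⌊x * m⌋₊ / l m)) atTop = 1 := fun x hx => by
      simpa using (ENNReal.tendsto_ofReal (hl x (by linarith [hx.1]))).liminf_eq
    calc ENNReal.ofReal (1 / 2) = ∫⁻ x in Set.Icc (1 / 2 : ℝ) 1, 1 := by
          rw [setLIntegral_one, Real.volume_Icc]; norm_num
      _ = ∫⁻ x in Set.Icc (1 / 2 : ℝ) 1,
          liminf (fun m : ℕ => ENNReal.ofReal (l ⌊x * m⌋₊ / l m)) atTop :=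
        setLIntegral_congr_fun measurableSet_Icc fun x hx => (hlim x hx).symm
      _ ≤ _ := lintegral_liminf_le' fun m => (hmeas m).aemeasurable
  exact eventually_lt_of_lt_liminf ((ENNReal.ofReal_lt_ofReal_iff (by norm_num)).2
    (by norm_num) |>.trans_le hfatou)

theorem eventually_mul_le_sum (hl : SlowlyVaryingSeq l) (hpos : ∀ n, 1 ≤ n → 0 < l n) :
    ∀ᶠ m : ℕ in atTop, (m : ℝ) / 4 * l m ≤ ∑ i ∈ Icc (m / 2) m, l i := by
  filter_upwards [hl.eventually_lt_lintegral, eventually_ge_atTop 2] with m hm hm2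
  have hm' : (0 : ℝ) < m := by positivity
  have hlm := hpos m (by omega)
  have hterm : ∀ i ∈ Icc (m / 2) m, 0 ≤ l i / l m := by
    intro i hi
    have := hpos i (by have := (mem_Icc.1 hi).1; omega)
    positivity
  have hsum := hm.trans_le
    (lintegral_floor_mul_le_sum (fun i => ENNReal.ofReal (l i / l m)) (by omega))
  rw [sum_congr rfl fun i hi => (ENNReal.ofReal_mul (hterm i hi)).symm,
    ← ENNReal.ofReal_sum_of_nonneg fun i hi => mul_nonneg (hterm i hi) (by positivity),
    ENNReal.ofReal_lt_ofReal_iff_of_nonneg (by norm_num), ← sum_mul, ← sum_div,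
    div_mul_div_comm, mul_one, lt_div_iff₀ (by positivity)] at hsum
  linarith

end SlowlyVaryingSeq

namespace RVSeq

variable {r : ℕ → ℝ} {ρ : ℝ}

theorem exists_pos_slowlyVaryingSeq (hr : RVSeq r ρ) :
    ∃ l : ℕ → ℝ, (∀ n, 1 ≤ n → 0 < l n) ∧ (∀ n, 1 ≤ n → r n = (n : ℝ) ^ ρ * l n) ∧
      SlowlyVaryingSeq l := by
  obtain ⟨hpos, l, hrl, hl⟩ := hr
  refine ⟨l, fun n hn => ?_, hrl, hl⟩
  have := hpos n hn
  rw [hrl n hn] at this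
  exact pos_of_mul_pos_right this (by positivity)

theorem inv (hr : RVSeq r ρ) : RVSeq (fun n => (r n)⁻¹) (-ρ) := by
  obtain ⟨l, -, hrl, hl⟩ := hr.exists_pos_slowlyVaryingSeq
  refine ⟨fun n hn => inv_pos.2 (hr.1 n hn), fun n => (l n)⁻¹, fun n hn => ?_, hl.inv⟩
  show (r n)⁻¹ = (n : ℝ) ^ (-ρ) * (l n)⁻¹
  rw [hrl n hn, mul_inv, Real.rpow_neg (Nat.cast_nonneg n)]

theorem isLittleO_div_log (hr : RVSeq r ρ) (hρ : ρ < 1) :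
    r =o[atTop] fun n : ℕ => (n : ℝ) / Real.log n := by
  obtain ⟨l, hlpos, hrl, hl⟩ := hr.exists_pos_slowlyVaryingSeq
  have hδ : 0 < (1 - ρ) / 2 := by linarith
  have hbig : r =O[atTop] fun n : ℕ => (n : ℝ) ^ (1 - (1 - ρ) / 2) := by
    refine IsBigO.of_bound 1 ?_
    filter_upwards [hl.eventually_le_rpow hlpos hδ, eventually_ge_atTop 1] with n hln hn
    have hn' : (0 : ℝ) < n := by exact_mod_cast hn
    rw [one_mul, Real.norm_of_nonneg (hr.1 n hn).le, Real.norm_of_nonneg (by positivity), hrl n hn]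
    calc (n : ℝ) ^ ρ * l n ≤ (n : ℝ) ^ ρ * (n : ℝ) ^ ((1 - ρ) / 2) := by gcongr
      _ = (n : ℝ) ^ (1 - (1 - ρ) / 2) := by rw [← Real.rpow_add hn']; ring_nf
  exact hbig.trans_isLittleO ((isLittleO_rpow_div_log hδ).comp_tendsto tendsto_natCast_atTop_atTop)

theorem exists_mul_le_sum (hr : RVSeq r ρ) (hρ : 0 ≤ ρ) :
    ∃ κ > 0, ∀ᶠ m : ℕ in atTop, κ * m * r m ≤ ∑ i ∈ Icc 1 m, r i := by
  obtain ⟨l, hlpos, hrl, hl⟩ := hr.exists_pos_slowlyVaryingSeq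
  refine ⟨(3 ^ ρ)⁻¹ / 4, by positivity, ?_⟩
  filter_upwards [hl.eventually_mul_le_sum hlpos, eventually_ge_atTop 2] with m hm hm2
  have hterm : ∀ i ∈ Icc (m / 2) m, ((m : ℝ) / 3) ^ ρ * l i ≤ r i := by
    intro i hi
    obtain ⟨hi1, -⟩ := mem_Icc.1 hi
    rw [hrl i (by omega)]
    have := hlpos i (by omega)
    gcongr
    rw [div_le_iff₀ (by norm_num)]
    exact_mod_cast (by omega : m ≤ i * 3)
  calc (3 ^ ρ)⁻¹ / 4 * m * r m = ((m : ℝ) / 3) ^ ρ * (m / 4 * l m) := by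
        rw [hrl m (by omega), Real.div_rpow (Nat.cast_nonneg m) (by norm_num)]
        field_simp
    _ ≤ ((m : ℝ) / 3) ^ ρ * ∑ i ∈ Icc (m / 2) m, l i := by gcongr
    _ = ∑ i ∈ Icc (m / 2) m, ((m : ℝ) / 3) ^ ρ * l i := mul_sum _ _ _
    _ ≤ ∑ i ∈ Icc (m / 2) m, r i := sum_le_sum hterm
    _ ≤ ∑ i ∈ Icc 1 m, r i := sum_le_sum_of_subset_of_nonneg (Icc_subset_Icc_left (by omega))
          fun i hi _ => (hr.1 i (mem_Icc.1 hi).1).le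

end RVSeq

section PartialSums

variable {r a : ℕ → ℝ}

theorem natCast_le_of_eq_add_sum (hr : ∀ n, 1 ≤ n → 0 ≤ r n)
    (ha : ∀ n, a n = n + ∑ i ∈ Icc 1 n, r i) (n : ℕ) : (n : ℝ) ≤ a n := by
  rw [ha n]
  exact le_add_of_nonneg_right (sum_nonneg fun i hi => hr i (mem_Icc.1 hi).1)

theorem monotone_of_eq_add_sum (hr : ∀ n, 1 ≤ n → 0 ≤ r n)
    (ha : ∀ n, a n = n + ∑ i ∈ Icc 1 n, r i) : Monotone a := by
  refine monotone_nat_of_le_succ fun n => ?_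
  rw [ha, ha, Nat.cast_succ, sum_Icc_succ_top (by omega)]
  linarith [hr (n + 1) (by omega)]

theorem tendsto_sq_div_mul_log (hr : ∀ n, 1 ≤ n → 1 < r n)
    (hsmall : r =o[atTop] fun n : ℕ => (n : ℝ) / Real.log n)
    (ha : ∀ n, a n = n + ∑ i ∈ Icc 1 n, r i) :
    Tendsto (fun m : ℕ => (m : ℝ) ^ 2 / (a m * Real.log (r m))) atTop atTop := by
  have hsum := isLittleO_sum_Icc hsmall monotoneOn_natCast_div_log
    (tendsto_natCast_atTop_atTop.atTop_mul_atTop₀ tendsto_natCast_div_log_atTop)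
  have hself : (fun m : ℕ => (m : ℝ)) =o[atTop] fun m : ℕ => m * (m / Real.log m) := by
    simpa using (isBigO_refl (fun m : ℕ => (m : ℝ)) atTop).mul_isLittleO
      ((isLittleO_one_left_iff ℝ).2 (tendsto_norm_atTop_atTop.comp tendsto_natCast_div_log_atTop))
  have ha_o : a =o[atTop] fun m : ℕ => m * (m / Real.log m) :=
    (hself.add hsum).congr_left fun m => (ha m).symm
  have hlog : (fun m => Real.log (r m)) =O[atTop] fun m : ℕ => Real.log m := by
    refine IsBigO.of_bound 1 ?_
    filter_upwards [eventually_le_of_isLittleO_div_log hsmall, eventually_ge_atTop 1]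
      with m hm hm1
    rw [one_mul, Real.norm_of_nonneg (Real.log_nonneg (hr m hm1).le),
      Real.norm_of_nonneg (Real.log_natCast_nonneg m)]
    exact Real.log_le_log (by linarith [hr m hm1]) hm
  have hsq : (fun m : ℕ => (m : ℝ) * (m / Real.log m) * Real.log m) =ᶠ[atTop]
      fun m : ℕ => (m : ℝ) ^ 2 := by
    filter_upwards [eventually_ge_atTop 3] with m hm
    have := Real.one_le_log_natCast hm
    field_simp
  refine tendsto_div_atTop_of_isLittleO ((ha_o.mul_isBigO hlog).congr' .rfl hsq) ?_ ?_
  · filter_upwards [eventually_ge_atTop 1] with m hm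
    have : (1 : ℝ) ≤ a m := (Nat.one_le_cast.2 hm).trans
      (natCast_le_of_eq_add_sum (fun n hn => (one_pos.trans (hr n hn)).le) ha m)
    exact mul_pos (by linarith) (Real.log_pos (hr m hm))
  · filter_upwards [eventually_ge_atTop 1] with m hm
    positivity

theorem tendsto_pred_div_sq_mul_log (hr : ∀ n, 1 ≤ n → 1 < r n)
    (hsmall : r =o[atTop] fun n : ℕ => (n : ℝ) / Real.log n)
    (hκ : ∃ κ > 0, ∀ᶠ m : ℕ in atTop, κ * m * r m ≤ ∑ i ∈ Icc 1 m, r i)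
    (ha : ∀ n, a n = n + ∑ i ∈ Icc 1 n, r i) :
    Tendsto (fun m : ℕ => a (m - 1) / (r m ^ 2 * Real.log (r m))) atTop atTop := by
  obtain ⟨κ, hκ, hsum⟩ := hκ
  have hgrow := (tendsto_div_atTop_of_isLittleO hsmall
    (eventually_ge_atTop 1 |>.mono fun n hn => one_pos.trans (hr n hn))
    (eventually_ge_atTop 3 |>.mono fun n hn =>
      div_pos (by positivity) (one_pos.trans_le (Real.one_le_log_natCast hn)))).const_mul_atTop
    (half_pos hκ)
  refine tendsto_atTop_mono' _ ?_ hgrow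
  filter_upwards [hsum, eventually_le_of_isLittleO_div_log hsmall, eventually_ge_atTop 3,
    tendsto_natCast_atTop_atTop.eventually_ge_atTop (2 / κ)] with m hm hrm hm3 hmκ
  obtain ⟨k, rfl⟩ : ∃ k, m = k + 1 := ⟨m - 1, by omega⟩
  have hR := hr (k + 1) (by omega)
  have hlogR : 0 < Real.log (r (k + 1)) := Real.log_pos hR
  have hlog : Real.log (r (k + 1)) ≤ Real.log ((k + 1 : ℕ) : ℝ) :=
    Real.log_le_log (by linarith) hrm
  have hκm : 1 ≤ κ / 2 * ((k + 1 : ℕ) : ℝ) := by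
    rw [div_le_iff₀' hκ] at hmκ
    linarith
  have ha_lower : κ / 2 * ((k + 1 : ℕ) : ℝ) * r (k + 1) ≤ a k := by
    rw [ha k]
    rw [sum_Icc_succ_top (by omega)] at hm
    nlinarith
  rw [Nat.add_sub_cancel]
  calc κ / 2 * (((k + 1 : ℕ) : ℝ) / Real.log ((k + 1 : ℕ) : ℝ) / r (k + 1))
      ≤ κ / 2 * (((k + 1 : ℕ) : ℝ) / (r (k + 1) * Real.log (r (k + 1)))) := by
        rw [div_div, mul_comm (Real.log _)]
        gcongr
    _ = κ / 2 * ((k + 1 : ℕ) : ℝ) * r (k + 1) / (r (k + 1) ^ 2 * Real.log (r (k + 1))) := by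
        field_simp
    _ ≤ a k / (r (k + 1) ^ 2 * Real.log (r (k + 1))) := by gcongr

end PartialSums

section FirstPassage

variable {a : ℕ → ℝ} {c : ℕ → ℕ}

theorem natCast_le_apply_of_eq_sInf (hle : ∀ n : ℕ, (n : ℝ) ≤ a n)
    (hc : ∀ n, c n = sInf {i | (n : ℝ) ≤ a i}) (n : ℕ) : (n : ℝ) ≤ a (c n) :=
  hc n ▸ Nat.sInf_mem (s := {i | (n : ℝ) ≤ a i}) ⟨n, hle n⟩

theorem apply_pred_lt_of_eq_sInf (hc : ∀ n, c n = sInf {i | (n : ℝ) ≤ a i}) {n : ℕ}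
    (hn : 1 ≤ c n) : a (c n - 1) < n :=
  not_le.1 (Nat.notMem_of_lt_sInf (s := {i | (n : ℝ) ≤ a i}) (by rw [← hc n]; omega))

theorem tendsto_atTop_of_eq_sInf (hmono : Monotone a) (hle : ∀ n : ℕ, (n : ℝ) ≤ a n)
    (hc : ∀ n, c n = sInf {i | (n : ℝ) ≤ a i}) : Tendsto c atTop atTop := by
  refine tendsto_atTop.2 fun M => ?_
  filter_upwards [tendsto_natCast_atTop_atTop.eventually_gt_atTop (a M)] with n hn
  by_contra! hlt
  linarith [hmono hlt.le, natCast_le_apply_of_eq_sInf hle hc n]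

end FirstPassage

theorem subcritical_scale_comparison_general (α : ℝ) (hα0 : 0 ≤ α) (hα1 : α ≤ 1)
    (ε : ℕ → ℝ) (hε01 : ∀ n, 1 ≤ n → ε n ∈ Set.Ioo (0 : ℝ) 1)
    (hrv : RVSeq ε (-α))
    (h1 : α = 1 →
      Filter.Tendsto (fun n : ℕ => (n : ℝ) * ε n / Real.log n) Filter.atTop Filter.atTop)
    (a : ℕ → ℝ) (b : ℕ → ℝ) (c : ℕ → ℕ)
    (ha : ∀ n, a n = (n : ℝ) + ∑ i ∈ Finset.Icc 1 n, (ε i)⁻¹)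
    (hc : ∀ n, c n = sInf {i : ℕ | (n : ℝ) ≤ a i})
    (hb : ∀ n, b n = (ε (c n))⁻¹) :
    Filter.Tendsto (fun n : ℕ => (n : ℝ) / (b n ^ 2 * Real.log (b n)))
        Filter.atTop Filter.atTop ∧
      Filter.Tendsto (fun n => (c n : ℝ) ^ 2 / ((n : ℝ) * Real.log (b n)))
        Filter.atTop Filter.atTop := by
  have hr1 : ∀ n, 1 ≤ n → 1 < (ε n)⁻¹ := fun n hn => one_lt_inv_iff₀.2 (hε01 n hn)
  have hr0 : ∀ n, 1 ≤ n → 0 ≤ (ε n)⁻¹ := fun n hn => (one_pos.trans (hr1 n hn)).le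
  have hrv' : RVSeq (fun n => (ε n)⁻¹) α := by simpa only [neg_neg] using hrv.inv
  have hsmall : (fun n => (ε n)⁻¹) =o[atTop] fun n : ℕ => (n : ℝ) / Real.log n := by
    rcases hα1.lt_or_eq with hlt | rfl
    · exact hrv'.isLittleO_div_log hlt
    · refine IsLittleO.of_tendsto_div_atTop ((h1 rfl).congr fun n => ?_)
      rw [div_inv_eq_mul, div_mul_eq_mul_div]
  have hle := natCast_le_of_eq_add_sum hr0 ha
  have hc_top := tendsto_atTop_of_eq_sInf (monotone_of_eq_add_sum hr0 ha) hle hc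
  refine ⟨tendsto_atTop_mono' _ ?_ ((tendsto_pred_div_sq_mul_log hr1 hsmall
    (hrv'.exists_mul_le_sum hα0) ha).comp hc_top),
    tendsto_atTop_mono' _ ?_ ((tendsto_sq_div_mul_log hr1 hsmall ha).comp hc_top)⟩
  · filter_upwards [hc_top.eventually_ge_atTop 1] with n hn
    rw [Function.comp_apply, hb n]
    exact div_le_div_of_nonneg_right (apply_pred_lt_of_eq_sInf hc hn).le
      (mul_nonneg (sq_nonneg _) (Real.log_nonneg (hr1 _ hn).le))
  · filter_upwards [eventually_ge_atTop 1, hc_top.eventually_ge_atTop 1] with n hn hcn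
    have hlog := Real.log_pos (hr1 _ hcn)
    rw [Function.comp_apply, hb n]
    exact div_le_div_of_nonneg_left (sq_nonneg _) (mul_pos (by positivity) hlog)
      (mul_le_mul_of_nonneg_right (natCast_le_apply_of_eq_sInf hle hc n) hlog.le)

/-- The subcritical assumptions and the derived sequences `a`, `c`, `b`:
`ε` takes values in `(0,1)`, is regularly varying with index `-α` for `α ∈ [0,1]`,
`ε_n → 0` if `α = 0`, and `nε_n / log n → ∞` if `α = 1`;
`a_n = n + Σ_{i≤n} 1/ε_i`, `c_n = min{i : a_i ≥ n}`, `b_n = 1/ε_{c_n}`. -/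
theorem subcritical_scale_comparison (α : ℝ) (hα0 : 0 ≤ α) (hα1 : α ≤ 1)
    (ε : ℕ → ℝ) (hε01 : ∀ n, 1 ≤ n → ε n ∈ Set.Ioo (0 : ℝ) 1)
    (hrv : RVSeq ε (-α))
    (h0 : α = 0 → Filter.Tendsto ε Filter.atTop (nhds 0))
    (h1 : α = 1 →
      Filter.Tendsto (fun n : ℕ => (n : ℝ) * ε n / Real.log n) Filter.atTop Filter.atTop)
    (a : ℕ → ℝ) (b : ℕ → ℝ) (c : ℕ → ℕ)
    (ha : ∀ n, a n = (n : ℝ) + ∑ i ∈ Finset.Icc 1 n, (ε i)⁻¹)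
    (hc : ∀ n, c n = sInf {i : ℕ | (n : ℝ) ≤ a i})
    (hb : ∀ n, b n = (ε (c n))⁻¹) :
    Filter.Tendsto (fun n : ℕ => (n : ℝ) / (b n ^ 2 * Real.log (b n)))
        Filter.atTop Filter.atTop ∧
      Filter.Tendsto (fun n => (c n : ℝ) ^ 2 / ((n : ℝ) * Real.log (b n)))
        Filter.atTop Filter.atTop :=
  subcritical_scale_comparison_general α hα0 hα1 ε hε01 hrv h1 a b c ha hc hb
end

section
/- For x > 0, the double integral ∫_x^∞ ∫_0^∞ (2y/√(2πt³)) exp(-(y+t)²/(2t)) dt dy equals e^{-2x}. -/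
/-!
The inner integrand is `2 e^{-2y}` times the inverse Gaussian density of the first time Brownian
motion with drift `+1` reaches level `y`, so the inner integral is `2 e^{-2y}` once that density is
shown to have mass one. The substitution `t = (y / s) ^ 2` turns the density into `2 φ(s - y / s)`,
with `φ` the standard normal density. The map `s ↦ y / s` exchanges `s - y / s` with its negative,
so the Cauchy–Schlömilch substitution `u = s - y / s`, whose Jacobian is `1 + y / s ^ 2`, gives
`∫₀^∞ φ(s - y / s) ds = 1 / 2`.
-/

open MeasureTheory Real Set ProbabilityTheory

section ChangeOfVariables

variable {E : Type*} [NormedAddCommGroup E] [NormedSpace ℝ E]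

theorem integral_Ioi_comp_sq (g : ℝ → E) :
    ∫ s in Ioi 0, (2 * s) • g (s ^ 2) = ∫ t in Ioi 0, g t := by
  rw [← integral_comp_rpow_Ioi_of_pos (g := g) two_pos]
  refine setIntegral_congr_fun measurableSet_Ioi fun s _ ↦ ?_
  norm_num

variable {c : ℝ}

theorem integral_Ioi_comp_div (hc : 0 < c) (g : ℝ → E) :
    ∫ s in Ioi 0, (c / s ^ 2) • g (c / s) = ∫ s in Ioi 0, g s := by
  have himage : (c / ·) '' Ioi (0 : ℝ) = Ioi 0 := by
    ext u
    refine ⟨fun ⟨s, hs, hu⟩ ↦ hu ▸ div_pos hc hs, fun hu ↦ ⟨c / u, div_pos hc hu, ?_⟩⟩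
    field_simp [(mem_Ioi.1 hu).ne']
  have hderiv (s : ℝ) (hs : s ∈ Ioi 0) :
      HasDerivWithinAt (c / ·) (-(c / s ^ 2)) (Ioi 0) s := by
    simpa [div_eq_mul_inv] using
      ((hasDerivAt_inv (mem_Ioi.1 hs).ne').const_mul c).hasDerivWithinAt
  have hinj : InjOn (c / ·) (Ioi (0 : ℝ)) := fun a _ b _ h ↦ by
    simpa [div_eq_mul_inv, hc.ne'] using h
  conv_rhs => rw [← himage, integral_image_eq_integral_abs_deriv_smul measurableSet_Ioi hderiv hinj]
  refine setIntegral_congr_fun measurableSet_Ioi fun s hs ↦ ?_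
  rw [abs_neg, abs_of_pos (div_pos hc (pow_pos hs 2))]

theorem strictMonoOn_sub_div (hc : 0 < c) : StrictMonoOn (fun s : ℝ ↦ s - c / s) (Ioi 0) :=
  fun _ ha _ _ hab ↦ sub_lt_sub hab (div_lt_div_of_pos_left hc ha hab)

theorem image_sub_div_Ioi (hc : 0 < c) : (fun s : ℝ ↦ s - c / s) '' Ioi 0 = univ := by
  refine eq_univ_of_forall fun u ↦ ?_
  -- the positive root of `s ^ 2 - u * s - c`
  set r := √(u ^ 2 + 4 * c)
  have hr : r ^ 2 = u ^ 2 + 4 * c := sq_sqrt (by positivity)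
  have hur : 0 < u + r := by nlinarith [sqrt_nonneg (u ^ 2 + 4 * c)]
  refine ⟨(u + r) / 2, half_pos hur, ?_⟩
  field_simp
  nlinarith

theorem hasDerivAt_sub_div {s : ℝ} (hs : s ≠ 0) :
    HasDerivAt (fun s : ℝ ↦ s - c / s) (1 + c / s ^ 2) s := by
  refine ((hasDerivAt_id' s).fun_sub
    ((hasDerivAt_const s c).fun_div (hasDerivAt_id' s) hs)).congr_deriv ?_
  field_simp
  ring

theorem integral_Ioi_comp_sub_div (hc : 0 < c) (f : ℝ → E) :
    ∫ s in Ioi 0, (1 + c / s ^ 2) • f (s - c / s) = ∫ u, f u := by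
  conv_rhs => rw [← setIntegral_univ, ← image_sub_div_Ioi hc,
    integral_image_eq_integral_abs_deriv_smul measurableSet_Ioi
      (fun s hs ↦ (hasDerivAt_sub_div (mem_Ioi.1 hs).ne').hasDerivWithinAt)
      (strictMonoOn_sub_div hc).injOn]
  refine setIntegral_congr_fun measurableSet_Ioi fun s _ ↦ ?_
  rw [abs_of_pos (by positivity)]

theorem integrableOn_Ioi_comp_sub_div_iff (hc : 0 < c) (f : ℝ → E) :
    IntegrableOn (fun s ↦ (1 + c / s ^ 2) • f (s - c / s)) (Ioi 0) ↔ Integrable f := by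
  conv_rhs => rw [← integrableOn_univ, ← image_sub_div_Ioi hc,
    integrableOn_image_iff_integrableOn_abs_deriv_smul measurableSet_Ioi
      (fun s hs ↦ (hasDerivAt_sub_div (mem_Ioi.1 hs).ne').hasDerivWithinAt)
      (strictMonoOn_sub_div hc).injOn]
  refine integrableOn_congr_fun (fun s _ ↦ ?_) measurableSet_Ioi
  rw [abs_of_pos (by positivity)]

theorem integral_Ioi_comp_sub_div_of_even (hc : 0 < c) {f : ℝ → E} (hf : Integrable f)
    (heven : ∀ u, f (-u) = f u) :
    ∫ s in Ioi 0, f (s - c / s) = (2 : ℝ)⁻¹ • ∫ u, f u := by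
  have hweighted := (integrableOn_Ioi_comp_sub_div_iff hc f).2 hf
  have hint : IntegrableOn (fun s ↦ f (s - c / s)) (Ioi 0) := by
    refine IntegrableOn.congr_fun (hweighted.bdd_smul 1 (φ := fun s ↦ (1 + c / s ^ 2)⁻¹)
      (Measurable.aestronglyMeasurable (by fun_prop)) ?_) (fun s _ ↦ ?_) measurableSet_Ioi
    · refine ae_of_all _ fun s ↦ ?_
      rw [norm_inv, Real.norm_of_nonneg (by positivity)]
      exact inv_le_one_of_one_le₀ (le_add_of_nonneg_right (by positivity))
    · rw [Pi.smul_apply', smul_smul, inv_mul_cancel₀ (by positivity), one_smul]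
  -- `s ↦ c / s` swaps `s - c / s` and its negative, so it preserves the integrand
  have hinv : ∫ s in Ioi 0, (c / s ^ 2) • f (s - c / s) = ∫ s in Ioi 0, f (s - c / s) := by
    conv_rhs => rw [← integral_Ioi_comp_div hc]
    refine setIntegral_congr_fun measurableSet_Ioi fun s hs ↦ ?_
    rw [← heven, div_div_cancel₀ hc.ne', neg_sub]
  have hsplit : ∫ s in Ioi 0, (c / s ^ 2) • f (s - c / s)
      = (∫ u, f u) - ∫ s in Ioi 0, f (s - c / s) := by
    rw [← integral_Ioi_comp_sub_div hc f, ← integral_sub hweighted hint]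
    simp only [add_smul, one_smul, add_sub_cancel_left]
  rw [hinv, eq_sub_iff_add_eq, ← two_smul ℝ] at hsplit
  rw [← hsplit, smul_smul, inv_mul_cancel₀ two_ne_zero, one_smul]

end ChangeOfVariables

section FirstPassage

variable {y : ℝ}

noncomputable def firstPassageDensity (y t : ℝ) : ℝ :=
  y / √(2 * π * t ^ 3) * exp (-(t - y) ^ 2 / (2 * t))

noncomputable def excursionEntranceDensity (y t : ℝ) : ℝ :=
  2 * y / √(2 * π * t ^ 3) * exp (-(y + t) ^ 2 / (2 * t))

theorem mul_firstPassageDensity_sq_div_eq_gaussianPDFReal (hy : 0 < y) {s : ℝ} (hs : 0 < s) :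
    (y / s ^ 2) * (2 * (y / s)) * firstPassageDensity y ((y / s) ^ 2)
      = 2 * gaussianPDFReal 0 1 (s - y / s) := by
  have hsqrt : √(2 * π * ((y / s) ^ 2) ^ 3) = √(2 * π) * (y / s) ^ 3 := by
    rw [show 2 * π * ((y / s) ^ 2) ^ 3 = 2 * π * ((y / s) ^ 3) ^ 2 by ring,
      sqrt_mul (by positivity), sqrt_sq (by positivity)]
  have hexp : -((y / s) ^ 2 - y) ^ 2 / (2 * (y / s) ^ 2) = -(s - y / s - 0) ^ 2 / (2 * 1) := by
    field_simp
    ring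
  simp only [firstPassageDensity, gaussianPDFReal, hsqrt, hexp, NNReal.coe_one, mul_one]
  field_simp

theorem integral_firstPassageDensity (hy : 0 < y) : ∫ t in Ioi 0, firstPassageDensity y t = 1 := by
  have heven (u : ℝ) : gaussianPDFReal 0 1 (-u) = gaussianPDFReal 0 1 u := by
    simp [gaussianPDFReal]
  calc ∫ t in Ioi 0, firstPassageDensity y t
      = ∫ s in Ioi 0, (y / s ^ 2) * (2 * (y / s)) * firstPassageDensity y ((y / s) ^ 2) := by
        rw [← integral_Ioi_comp_sq, ← integral_Ioi_comp_div hy]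
        simp only [smul_eq_mul, mul_assoc]
    _ = ∫ s in Ioi 0, 2 * gaussianPDFReal 0 1 (s - y / s) :=
        setIntegral_congr_fun measurableSet_Ioi fun _ hs ↦
          mul_firstPassageDensity_sq_div_eq_gaussianPDFReal hy hs
    _ = 1 := by
        rw [integral_const_mul, integral_Ioi_comp_sub_div_of_even hy
          (integrable_gaussianPDFReal 0 1) heven, integral_gaussianPDFReal_eq_one 0 one_ne_zero]
        norm_num

theorem excursionEntranceDensity_eq_mul_firstPassageDensity {t : ℝ} (ht : t ≠ 0) :
    excursionEntranceDensity y t = 2 * exp (-2 * y) * firstPassageDensity y t := by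
  have hexp : -(y + t) ^ 2 / (2 * t) = -2 * y + -(t - y) ^ 2 / (2 * t) := by
    field_simp
    ring
  rw [excursionEntranceDensity, firstPassageDensity, hexp, exp_add]
  ring

theorem integral_excursionEntranceDensity (hy : 0 < y) :
    ∫ t in Ioi 0, excursionEntranceDensity y t = 2 * exp (-2 * y) := by
  rw [setIntegral_congr_fun measurableSet_Ioi fun _ ht ↦
      excursionEntranceDensity_eq_mul_firstPassageDensity (ne_of_gt ht),
    integral_const_mul, integral_firstPassageDensity hy, mul_one]

end FirstPassage

/-- Integrating the entrance law of the excursion measure of Brownian motion with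
drift `-1` over time `t ∈ (0,∞)` and heights `y > x` yields the exponential tail:
`∫_x^∞ ∫_0^∞ (2y/√(2πt³)) exp(-(y+t)²/(2t)) dt dy = e^{-2x}` for `x > 0`. -/
theorem excursion_double_integral (x : ℝ) (hx : 0 < x) :
    (∫ y in Set.Ioi x, ∫ t in Set.Ioi (0 : ℝ),
        (2 * y / Real.sqrt (2 * π * t ^ 3)) * Real.exp (-(y + t) ^ 2 / (2 * t)))
      = Real.exp (-2 * x) := by
  change ∫ y in Ioi x, ∫ t in Ioi 0, excursionEntranceDensity y t = _
  rw [setIntegral_congr_fun measurableSet_Ioi fun y hy ↦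
      integral_excursionEntranceDensity (hx.trans hy),
    integral_const_mul, integral_exp_mul_Ioi (by norm_num)]
  ring
end
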